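/- arXiv:2605.06385 — 3 statements merged into one kernel-verified Lean document; each statement's English description precedes it below -/
import Mathlib

section
/- Let G=(V,E) be a directed graph, possibly cyclic, whose node set is partitioned as V = O ∪ L into observed and latent nodes, let X,Y ∈ O be distinct, and let G^acy be a σ-acyclification of G. Then there exist W ∈ MB_σ^G(X)\{Y} and Z ⊆ MB_σ^G(Y)\{X,W} such that W is not σ-separated from Y given Z in G and W is σ-separated from Y given Z ∪ {X} in G, if and only if there exist W ∈ MB_d^{G^acy}(X)\{Y} and Z ⊆ MB_d^{G^acy}(Y)\{X,W} such that W is not d-separated from Y given Z in G^acy and W is d-separated from Y given Z ∪ {X} in G^acy; the analogous equivalence holds for the conditions that W is not (σ- resp. d-) separated from X given Z and W is (σ- resp. d-) separated from Y given Z. -/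
/-- A directed graph (loopless, possibly cyclic). -/
structure DiGraph (V : Type) where
  Edge : V → V → Prop
  loopless : ∀ v, ¬ Edge v v

namespace DiGraph

variable {V : Type}

/-- Reachability by a directed path (possibly of length zero). -/
def reach (G : DiGraph V) : V → V → Prop := Relation.ReflTransGen G.Edge

/-- Ancestors of a set: nodes admitting a directed path (possibly of length zero)
to some node of the set. -/
def anc (G : DiGraph V) (S : Set V) : Set V := {Z | ∃ s ∈ S, G.reach Z s}

/-- The strongly connected component of a node. -/
def scc (G : DiGraph V) (X : V) : Set V := {Z | G.reach X Z ∧ G.reach Z X}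

/-- Descendants: nodes `Z ≠ X` with a directed path from `X` to `Z`. -/
def de (G : DiGraph V) (X : V) : Set V := {Z | Z ≠ X ∧ Relation.TransGen G.Edge X Z}

/-- Children of a node. -/
def ch (G : DiGraph V) (X : V) : Set V := {Z | G.Edge X Z}

/-- A directed graph is acyclic (a DAG) if it has no directed cycles. -/
def Acyclic (G : DiGraph V) : Prop := ∀ v, ¬ Relation.TransGen G.Edge v v

end DiGraph

/-- A path between `X` and `Y` in `G`: a sequence of `k+2` distinct nodes,
where consecutive nodes are joined by an edge of `G` in one of the two
orientations (recorded by `dir`: `dir i = true` means the edge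
`node i → node (i+1)` is used, `dir i = false` means `node (i+1) → node i`). -/
structure GPath {V : Type} (G : DiGraph V) (X Y : V) where
  k : ℕ
  node : Fin (k + 2) → V
  dir : Fin (k + 1) → Bool
  inj : Function.Injective node
  first : node 0 = X
  last : node (Fin.last (k + 1)) = Y
  adj : ∀ i : Fin (k + 1),
    (dir i = true → G.Edge (node i.castSucc) (node i.succ)) ∧
    (dir i = false → G.Edge (node i.succ) (node i.castSucc))

namespace GPath

variable {V : Type} {G : DiGraph V} {X Y : V}

/-- The `j`-th interior (non-endpoint) node of the path (position `j+1`). -/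
def inner (p : GPath G X Y) (j : Fin p.k) : V := p.node j.succ.castSucc

/-- The interior node at position `j+1` is a collider: both incident edges
of the path point into it. -/
def isCollider (p : GPath G X Y) (j : Fin p.k) : Prop :=
  p.dir j.castSucc = true ∧ p.dir j.succ = false

/-- The path is σ-blocked by `S`. -/
def sigmaBlocked (p : GPath G X Y) (S : Set V) : Prop :=
  ∃ j : Fin p.k,
    (p.isCollider j ∧ p.inner j ∉ G.anc S) ∨
    (¬ p.isCollider j ∧ p.inner j ∈ S ∧
      ((p.dir j.succ = true ∧ p.node j.succ.succ ∉ G.scc (p.inner j)) ∨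
       (p.dir j.castSucc = false ∧ p.node j.castSucc.castSucc ∉ G.scc (p.inner j))))

/-- The path is d-blocked by `S`. -/
def dBlocked (p : GPath G X Y) (S : Set V) : Prop :=
  ∃ j : Fin p.k,
    (p.isCollider j ∧ p.inner j ∉ G.anc S) ∨
    (¬ p.isCollider j ∧ p.inner j ∈ S)

end GPath

namespace DiGraph

variable {V : Type}

/-- `X` and `Y` are σ-separated given `S`: every path between them is σ-blocked. -/
def sigmaSep (G : DiGraph V) (X Y : V) (S : Set V) : Prop :=
  ∀ p : GPath G X Y, p.sigmaBlocked S

/-- `X` and `Y` are d-separated given `S`: every path between them is d-blocked. -/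
def dSep (G : DiGraph V) (X Y : V) (S : Set V) : Prop :=
  ∀ p : GPath G X Y, p.dBlocked S

end DiGraph

/-- `Ga` is a σ-acyclification of `G`. -/
def IsAcyclification {V : Type} (G Ga : DiGraph V) : Prop :=
  Ga.Acyclic ∧
  (∀ X Y : V, X ≠ Y → X ∉ G.scc Y → (Ga.Edge X Y ↔ ∃ W ∈ G.scc Y, G.Edge X W)) ∧
  (∀ X Y : V, X ≠ Y → X ∈ G.scc Y → Xor' (Ga.Edge X Y) (Ga.Edge Y X))

namespace DiGraph

variable {V : Type}

/-- `S` is the observed Markov blanket of `X` (w.r.t. σ-separation) given the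
observed node set `Obs`: the minimal set `S ⊆ Obs \ {X}` such that `X` is
σ-separated from every node of `Obs \ (S ∪ {X})` given `S`. -/
def IsSigmaMB (G : DiGraph V) (Obs : Set V) (X : V) (S : Set V) : Prop :=
  S ⊆ Obs \ {X} ∧
  (∀ W ∈ Obs \ (S ∪ {X}), G.sigmaSep X W S) ∧
  (∀ T ⊆ Obs \ {X}, (∀ W ∈ Obs \ (T ∪ {X}), G.sigmaSep X W T) → S ⊆ T)

/-- `S` is the observed Markov blanket of `X` (w.r.t. d-separation). -/
def IsDMB (G : DiGraph V) (Obs : Set V) (X : V) (S : Set V) : Prop :=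
  S ⊆ Obs \ {X} ∧
  (∀ W ∈ Obs \ (S ∪ {X}), G.dSep X W S) ∧
  (∀ T ⊆ Obs \ {X}, (∀ W ∈ Obs \ (T ∪ {X}), G.dSep X W T) → S ⊆ T)

/-- `Z` is a backdoor adjustment set for `(X, Y)`: `Z` avoids `X`, `Y` and the
descendants of `X`, and σ-blocks every backdoor path from `X` to `Y`
(a path whose first edge has an arrowhead into `X`). -/
def IsBackdoorAdjustment (G : DiGraph V) (X Y : V) (Z : Set V) : Prop :=
  X ∉ Z ∧ Y ∉ Z ∧ Z ∩ G.de X = ∅ ∧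
  ∀ p : GPath G X Y, p.dir 0 = false → p.sigmaBlocked Z

end DiGraph

/-- Pre-treatment assumption: the outcome `Y` has no descendants and the
treatment `X` has no children except possibly `Y`. -/
def PreTreatment {V : Type} (G : DiGraph V) (X Y : V) : Prop :=
  G.de Y = ∅ ∧ G.ch X ⊆ {Y}

section AuxDev
open DiGraph
variable {V : Type}

namespace DiGraph
lemma mem_scc_self (G : DiGraph V) (x : V) : x ∈ G.scc x :=
  ⟨Relation.ReflTransGen.refl, Relation.ReflTransGen.refl⟩

lemma scc_symm {G : DiGraph V} {x z : V} (h : z ∈ G.scc x) : x ∈ G.scc z := ⟨h.2, h.1⟩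

lemma scc_eq {G : DiGraph V} {x z : V} (h : z ∈ G.scc x) : G.scc z = G.scc x := by
  ext w
  constructor <;> intro hw
  · exact ⟨Relation.ReflTransGen.trans h.1 hw.1, Relation.ReflTransGen.trans hw.2 h.2⟩
  · exact ⟨Relation.ReflTransGen.trans h.2 hw.1, Relation.ReflTransGen.trans hw.2 h.1⟩

lemma not_mem_scc_symm {G : DiGraph V} {x z : V} (h : z ∉ G.scc x) : x ∉ G.scc z :=
  fun hx => h (scc_symm hx)

lemma anc_of_mem {G : DiGraph V} {S : Set V} {s : V} (hs : s ∈ S) : s ∈ G.anc S :=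
  ⟨s, hs, Relation.ReflTransGen.refl⟩

lemma anc_of_edge {G : DiGraph V} {S : Set V} {u v : V} (e : G.Edge u v)
    (h : v ∈ G.anc S) : u ∈ G.anc S := by
  obtain ⟨s, hs, hr⟩ := h
  exact ⟨s, hs, Relation.ReflTransGen.head e hr⟩

lemma anc_of_reach {G : DiGraph V} {S : Set V} {u v : V} (e : G.reach u v)
    (h : v ∈ G.anc S) : u ∈ G.anc S := by
  obtain ⟨s, hs, hr⟩ := h
  exact ⟨s, hs, Relation.ReflTransGen.trans e hr⟩
end DiGraph

/-- Walks between nodes: like paths but nodes may repeat. -/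
inductive Walk (H : DiGraph V) : V → V → Type
  | nil {v : V} : Walk H v v
  | cons {u v w : V} (b : Bool) (h : cond b (H.Edge u v) (H.Edge v u)) (t : Walk H v w) :
      Walk H u w

namespace Walk
variable {H : DiGraph V}

def len : ∀ {u w}, Walk H u w → ℕ
  | _, _, nil => 0
  | _, _, cons _ _ t => t.len + 1

def append : ∀ {u v w}, Walk H u v → Walk H v w → Walk H u w
  | _, _, _, nil, t => t
  | _, _, _, cons b h t, t2 => cons b h (t.append t2)

@[simp] lemma nil_append {v w : V} (t : Walk H v w) : (nil : Walk H v v).append t = t := rfl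
@[simp] lemma cons_append {u v v' w : V} (b : Bool) (h) (t : Walk H v v') (t2 : Walk H v' w) :
    (cons (u := u) b h t).append t2 = cons b h (t.append t2) := rfl

@[simp] lemma len_append : ∀ {u v w} (w1 : Walk H u v) (w2 : Walk H v w),
    (w1.append w2).len = w1.len + w2.len
  | _, _, _, nil, t => by simp [len]
  | _, _, _, cons b h t, t2 => by simp [len, len_append t t2]; omega

def nodes : ∀ {u w}, Walk H u w → List V
  | u, _, nil => [u]
  | u, _, cons _ _ t => u :: t.nodes

def dirs : ∀ {u w}, Walk H u w → List Bool
  | _, _, nil => []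
  | _, _, cons b _ t => b :: t.dirs

@[simp] lemma nodes_nil {v : V} : (nil : Walk H v v).nodes = [v] := rfl
@[simp] lemma nodes_cons {u v w : V} (b : Bool) (h) (t : Walk H v w) :
    (cons (u := u) b h t).nodes = u :: t.nodes := rfl

lemma nodes_length : ∀ {u w} (w1 : Walk H u w), w1.nodes.length = w1.len + 1
  | _, _, nil => rfl
  | _, _, cons _ _ t => by simp [nodes, len, nodes_length t]

lemma nodes_ne_nil {u w : V} (w1 : Walk H u w) : w1.nodes ≠ [] := by
  cases w1 <;> simp [nodes]

/-- The "entry" (previous node and stored direction) seen by a continuation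
after traversing `w` starting with entry `e`. -/
def lastEntry : Option (V × Bool) → ∀ {u w}, Walk H u w → Option (V × Bool)
  | e, _, _, nil => e
  | _, u, _, cons b _ t => lastEntry (some (u, b)) t

def allTrue : ∀ {u w}, Walk H u w → Prop
  | _, _, nil => True
  | _, _, cons b _ t => b = true ∧ allTrue t

end Walk

/-- The local openness condition at a node `c`, entered by an edge from `p`
with stored direction `d` (`d = true` means `p → c`), and left by an edge to
`n` with stored direction `b` (`b = true` means `c → n`).  `c` is a collider
iff `d = true ∧ b = false`.  `P c x` is the exemption allowing a conditioned
non-collider (used for σ-separation: `x ∈ scc c`). -/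
def OKn (H : DiGraph V) (S : Set V) (P : V → V → Prop)
    (p : V) (d : Bool) (c : V) (b : Bool) (n : V) : Prop :=
  if d = true ∧ b = false then c ∈ H.anc S
  else (d = false → c ∈ S → P c p) ∧ (b = true → c ∈ S → P c n)

/-- Openness of a walk, relative to an optional entry edge context. -/
def OpenF (H : DiGraph V) (S : Set V) (P : V → V → Prop) :
    Option (V × Bool) → ∀ {u w : V}, Walk H u w → Prop
  | _, _, _, .nil => True
  | none, u, _, .cons b _ t => OpenF H S P (some (u, b)) t
  | some (p, d), u, _, .cons (v := v) b _ t =>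
      OKn H S P p d u b v ∧ OpenF H S P (some (u, b)) t

variable {H : DiGraph V} {S : Set V} {P : V → V → Prop}

@[simp] lemma OpenF_nil (e : Option (V × Bool)) {v : V} :
    OpenF H S P e (Walk.nil : Walk H v v) = True := by
  cases e with
  | none => rfl
  | some pd => cases pd; rfl

@[simp] lemma OpenF_none_cons {u v w : V} (b : Bool) (h) (t : Walk H v w) :
    OpenF H S P none (Walk.cons (u := u) b h t) = OpenF H S P (some (u, b)) t := rfl

@[simp] lemma OpenF_some_cons (p : V) (d : Bool) {u v w : V} (b : Bool) (h) (t : Walk H v w) :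
    OpenF H S P (some (p, d)) (Walk.cons (u := u) b h t) =
      (OKn H S P p d u b v ∧ OpenF H S P (some (u, b)) t) := rfl

lemma OpenF_weaken {u w : V} {e : V × Bool} {w1 : Walk H u w}
    (h : OpenF H S P (some e) w1) : OpenF H S P none w1 := by
  cases w1 with
  | nil => trivial
  | cons b hb t => exact h.2

/-- Strengthening for an entry whose edge points out of the start node. -/
lemma OpenF_strengthen {u w : V} {w1 : Walk H u w} (hS : u ∉ S)
    (h : OpenF H S P none w1) (q : V) : OpenF H S P (some (q, false)) w1 := by
  cases w1 with
  | nil => trivial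
  | cons b hb t =>
    refine ⟨?_, h⟩
    unfold OKn
    rw [if_neg (by simp)]
    exact ⟨fun _ hc => absurd hc hS, fun _ hc => absurd hc hS⟩

lemma OpenF_append : ∀ {u v w} (w1 : Walk H u v) (w2 : Walk H v w) (e : Option (V × Bool)),
    OpenF H S P e (w1.append w2) ↔ OpenF H S P e w1 ∧ OpenF H S P (w1.lastEntry e) w2
  | _, _, _, .nil, w2, e => by simp [Walk.lastEntry]
  | _, _, _, .cons b h t, w2, none => by
      simp only [Walk.cons_append, OpenF_none_cons, Walk.lastEntry]
      exact OpenF_append t w2 _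
  | _, _, _, .cons b h t, w2, some (p, d) => by
      simp only [Walk.cons_append, OpenF_some_cons, Walk.lastEntry]
      rw [OpenF_append t w2 _, and_assoc]

lemma lastEntry_some : ∀ {u w : V} (w1 : Walk H u w) (e : V × Bool),
    ∃ e', w1.lastEntry (some e) = some e'
  | _, _, .nil, e => ⟨e, rfl⟩
  | _, _, .cons b h t, e => lastEntry_some t _

lemma lastEntry_allTrue : ∀ {u w : V} (w1 : Walk H u w) (p : V), w1.allTrue →
    ∃ q, w1.lastEntry (some (p, true)) = some (q, true)
  | _, _, .nil, p, _ => ⟨p, rfl⟩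
  | _, _, .cons b h t, p, hT => by
      obtain ⟨hb, ht⟩ := hT
      subst hb
      exact lastEntry_allTrue t _ ht

/-- First stored direction of a walk. -/
def Walk.firstDir : ∀ {u w : V}, Walk H u w → Option Bool
  | _, _, .nil => none
  | _, _, .cons b _ _ => some b

/-- Chain lemma: along an open walk whose first edge leaves its start `a`,
either `a` is an ancestor of `S` or the whole walk is a directed path. -/
lemma chainF {a c : V} (w : Walk H a c) :
    ∀ p : V, OpenF H S P (some (p, true)) w → w.firstDir = some true →
    a ∈ H.anc S ∨ w.allTrue := by
  induction w with
  | nil => intro p _ hfd; cases hfd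
  | cons b hb t ih =>
    intro p hO hfd
    have hb1 : b = true := by simpa [Walk.firstDir] using hfd
    subst hb1
    have he : H.Edge _ _ := hb
    cases t with
    | nil => exact Or.inr ⟨rfl, trivial⟩
    | cons b2 h2 t2 =>
      cases b2 with
      | false =>
        have h2' := hO.2.1
        unfold OKn at h2'
        rw [if_pos (by simp)] at h2'
        exact Or.inl (DiGraph.anc_of_edge he h2')
      | true =>
        rcases ih _ hO.2 rfl with h | h
        · exact Or.inl (DiGraph.anc_of_edge he h)
        · exact Or.inr ⟨rfl, h⟩
end AuxDev
/- ## Surgery: an open walk yields an open walk without repeated nodes -/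

lemma list_dup_decomp : ∀ (l : List V), ¬ l.Nodup →
    ∃ (l1 l2 l3 : List V) (v : V), l = l1 ++ v :: (l2 ++ v :: l3) := by
  intro l
  induction l with
  | nil => intro h; exact absurd List.nodup_nil h
  | cons a t ih =>
    intro h
    rw [List.nodup_cons] at h
    push_neg at h
    by_cases ha : a ∈ t
    · obtain ⟨s, t', rfl⟩ := List.append_of_mem ha
      exact ⟨[], s, t', a, rfl⟩
    · obtain ⟨l1, l2, l3, v, rfl⟩ := ih (h ha)
      exact ⟨a :: l1, l2, l3, v, rfl⟩

lemma walk_split : ∀ {u y : V} (w : Walk H u y) (l1 l2 : List V) (v : V),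
    w.nodes = l1 ++ v :: l2 →
    ∃ (w1 : Walk H u v) (w2 : Walk H v y),
      w = w1.append w2 ∧ w1.len = l1.length ∧ w2.nodes = v :: l2 := by
  intro u y w
  induction w with
  | nil =>
    intro l1 l2 v h
    match l1, h with
    | [], h =>
      simp only [Walk.nodes_nil, List.nil_append, List.cons.injEq] at h
      obtain ⟨rfl, rfl⟩ := h
      exact ⟨Walk.nil, Walk.nil, rfl, rfl, rfl⟩
    | (a :: l1'), h =>
      simp only [Walk.nodes_nil, List.cons_append, List.cons.injEq] at h
      exact absurd h.2 (by simp)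
  | cons b hb t ih =>
    intro l1 l2 v h
    match l1, h with
    | [], h =>
      simp only [Walk.nodes_cons, List.nil_append, List.cons.injEq] at h
      obtain ⟨rfl, h2⟩ := h
      refine ⟨Walk.nil, Walk.cons b hb t, rfl, rfl, by simp [h2]⟩
    | (a :: l1'), h =>
      simp only [Walk.nodes_cons, List.cons_append, List.cons.injEq] at h
      obtain ⟨rfl, h2⟩ := h
      obtain ⟨w1, w2, rfl, hl, hn⟩ := ih l1' l2 v h2
      exact ⟨Walk.cons b hb w1, w2, rfl, by simp [Walk.len, hl], hn⟩

lemma surgery_step {u y : V} (w : Walk H u y) (hO : OpenF H S P none w)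
    (hnd : ¬ w.nodes.Nodup) :
    ∃ w' : Walk H u y, OpenF H S P none w' ∧ w'.len < w.len := by
  obtain ⟨l1, l2, l3, v, hdec⟩ := list_dup_decomp _ hnd
  obtain ⟨w1, wr, rfl, hw1len, hwr⟩ := walk_split w l1 (l2 ++ v :: l3) v hdec
  obtain ⟨w2, w3, rfl, hw2len, hw3⟩ := walk_split wr (v :: l2) l3 v (by simpa using hwr)
  have hw2pos : 0 < w2.len := by simp [hw2len]
  rw [OpenF_append, OpenF_append] at hO
  obtain ⟨hO1, hO2, hO3⟩ := hO
  refine ⟨w1.append w3, ?_, by simp; omega⟩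
  rw [OpenF_append]
  refine ⟨hO1, ?_⟩
  cases w3 with
  | nil => simp
  | cons b3 h3 t3 =>
    cases w1 with
    | nil =>
      -- entry is `none`; strip the head condition present in hO3
      cases w2 with
      | nil => exact absurd hw2pos (by simp [Walk.len])
      | cons b2 h2 t2 =>
        obtain ⟨e2, he2⟩ := lastEntry_some t2 (_, b2)
        simp only [Walk.lastEntry] at hO3 ⊢
        rw [he2] at hO3
        exact hO3.2
    | cons b0 h0 t0 =>
      obtain ⟨⟨p1, d1⟩, he1⟩ := lastEntry_some t0 (_, b0)
      have he1' : (Walk.cons b0 h0 t0).lastEntry (none : Option (V × Bool)) = some (p1, d1) := by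
        simpa [Walk.lastEntry] using he1
      rw [he1'] at hO2 hO3 ⊢
      cases w2 with
      | nil => exact absurd hw2pos (by simp [Walk.len])
      | cons b2 h2 t2 =>
        obtain ⟨⟨p2, d2⟩, he2⟩ := lastEntry_some (Walk.cons b2 h2 t2) (p1, d1)
        rw [he2] at hO3
        refine ⟨?_, hO3.2⟩
        by_cases hcol : d1 = true ∧ b3 = false
        · unfold OKn
          rw [if_pos hcol]
          obtain ⟨hd1, hb3⟩ := hcol
          subst hd1; subst hb3
          cases b2 with
          | false =>
            have := hO2.1
            unfold OKn at this
            rwa [if_pos (by simp)] at this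
          | true =>
            rcases chainF _ p1 hO2 rfl with h | h
            · exact h
            · obtain ⟨q, hq⟩ := lastEntry_allTrue (Walk.cons true h2 t2) p1 h
              rw [hq] at he2
              injection he2 with he2'
              cases he2'
              have := hO3.1
              unfold OKn at this
              rwa [if_pos (by simp)] at this
        · unfold OKn
          rw [if_neg hcol]
          constructor
          · intro hd1 hvS
            have := hO2.1
            unfold OKn at this
            rw [if_neg (by simp [hd1])] at this
            exact this.1 hd1 hvS
          · intro hb3 hvS
            have := hO3.1
            unfold OKn at this
            rw [if_neg (by simp [hb3])] at this
            exact this.2 hb3 hvS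

/-- From an open walk we can extract an open walk without repeated nodes. -/
lemma surgery {u y : V} (w : Walk H u y) (hO : OpenF H S P none w) :
    ∃ w' : Walk H u y, OpenF H S P none w' ∧ w'.nodes.Nodup := by
  generalize hn : w.len = n
  induction n using Nat.strong_induction_on generalizing w with
  | _ n ih =>
    by_cases hnd : w.nodes.Nodup
    · exact ⟨w, hO, hnd⟩
    · obtain ⟨w', hO', hlt⟩ := surgery_step w hO hnd
      exact ih w'.len (hn ▸ hlt) w' hO' rfl
/- ## Relating GPaths and walks -/

/-- The per-interior-node openness condition for a `GPath`. -/
def GOKn {H : DiGraph V} {X Y : V} (S : Set V) (P : V → V → Prop) (p : GPath H X Y) : Prop :=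
  ∀ j : Fin p.k, OKn H S P (p.node j.castSucc.castSucc) (p.dir j.castSucc) (p.inner j)
      (p.dir j.succ) (p.node j.succ.succ)

lemma not_sigmaBlocked_iff {G : DiGraph V} {X Y : V} (p : GPath G X Y) (S : Set V) :
    ¬ p.sigmaBlocked S ↔ GOKn S (fun c x => x ∈ G.scc c) p := by
  unfold GPath.sigmaBlocked GOKn GPath.isCollider
  rw [not_exists]
  refine forall_congr' fun j => ?_
  unfold OKn
  by_cases hC : p.dir j.castSucc = true ∧ p.dir j.succ = false
  · rw [if_pos hC]
    constructor
    · intro h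
      by_contra hA
      exact h (Or.inl ⟨hC, hA⟩)
    · rintro hA (⟨_, h⟩ | ⟨hnc, _⟩)
      · exact h hA
      · exact hnc hC
  · rw [if_neg hC]
    constructor
    · intro h
      constructor
      · intro hd hs
        by_contra hn
        exact h (Or.inr ⟨hC, hs, Or.inr ⟨hd, hn⟩⟩)
      · intro hb hs
        by_contra hn
        exact h (Or.inr ⟨hC, hs, Or.inl ⟨hb, hn⟩⟩)
    · rintro ⟨h1, h2⟩ (⟨hc, _⟩ | ⟨_, hs, (⟨hb, hn⟩ | ⟨hd, hn⟩)⟩)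
      · exact hC hc
      · exact hn (h2 hb hs)
      · exact hn (h1 hd hs)

lemma not_dBlocked_iff {G : DiGraph V} {X Y : V} (p : GPath G X Y) (S : Set V) :
    ¬ p.dBlocked S ↔ GOKn S (fun _ _ => False) p := by
  unfold GPath.dBlocked GOKn GPath.isCollider
  rw [not_exists]
  refine forall_congr' fun j => ?_
  unfold OKn
  by_cases hC : p.dir j.castSucc = true ∧ p.dir j.succ = false
  · rw [if_pos hC]
    constructor
    · intro h
      by_contra hA
      exact h (Or.inl ⟨hC, hA⟩)
    · rintro hA (⟨_, h⟩ | ⟨hnc, _⟩)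
      · exact h hA
      · exact hnc hC
  · rw [if_neg hC]
    constructor
    · intro h
      have hns : p.inner j ∉ S := fun hs => h (Or.inr ⟨hC, hs⟩)
      exact ⟨fun _ hs => absurd hs hns, fun _ hs => absurd hs hns⟩
    · rintro ⟨h1, h2⟩ (⟨hc, _⟩ | ⟨_, hs⟩)
      · exact hC hc
      · cases hd : p.dir j.castSucc with
        | false => exact h1 hd hs
        | true =>
          cases hb : p.dir j.succ with
          | false => exact hC ⟨hd, hb⟩
          | true => exact h2 hb hs

lemma node_congr {G : DiGraph V} {X Y : V} (p : GPath G X Y) {i j : ℕ}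
    {hi : i < p.k + 2} {hj : j < p.k + 2} (h : i = j) : p.node ⟨i, hi⟩ = p.node ⟨j, hj⟩ := by
  subst h; rfl

lemma dir_congr {G : DiGraph V} {X Y : V} (p : GPath G X Y) {i j : ℕ}
    {hi : i < p.k + 1} {hj : j < p.k + 1} (h : i = j) : p.dir ⟨i, hi⟩ = p.dir ⟨j, hj⟩ := by
  subst h; rfl

lemma edge_of_adj {G : DiGraph V} {X Y : V} (p : GPath G X Y) (i : Fin (p.k + 1)) :
    cond (p.dir i) (G.Edge (p.node i.castSucc) (p.node i.succ))
      (G.Edge (p.node i.succ) (p.node i.castSucc)) := by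
  cases h : p.dir i with
  | true => simpa using (p.adj i).1 h
  | false => simpa using (p.adj i).2 h

/-- From an open `GPath`, an open walk. -/
lemma walk_of_gpath {H : DiGraph V} {S : Set V} {P : V → V → Prop} {X Y : V}
    (p : GPath H X Y) (hok : GOKn S P p) :
    ∃ w : Walk H X Y, OpenF H S P none w := by
  have hlast : p.node ⟨p.k + 1, by omega⟩ = Y := p.last
  have hfirst : p.node ⟨0, by omega⟩ = X := p.first
  have claim : ∀ (m i : ℕ), ∀ _hi : i + m = p.k,
      ∃ w : Walk H (p.node ⟨i + 1, by omega⟩) Y,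
        OpenF H S P (some (p.node ⟨i, by omega⟩, p.dir ⟨i, by omega⟩)) w := by
    intro m
    induction m with
    | zero =>
      intro i hi
      have hik : i = p.k := by omega
      subst hik
      rw [hlast]
      exact ⟨Walk.nil, by simp⟩
    | succ m ih =>
      intro i hi
      obtain ⟨w', hw'⟩ := ih (i + 1) (by omega)
      have hok' := hok ⟨i, by omega⟩
      simp only [GPath.inner, Fin.castSucc_mk, Fin.succ_mk] at hok'
      have hedge := edge_of_adj p ⟨i + 1, by omega⟩
      simp only [Fin.castSucc_mk, Fin.succ_mk] at hedge
      refine ⟨Walk.cons (p.dir ⟨i + 1, by omega⟩) hedge w', ?_⟩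
      simp only [OpenF_some_cons]
      exact ⟨hok', hw'⟩
  obtain ⟨w', hw'⟩ := claim p.k 0 (by omega)
  have hedge := edge_of_adj p ⟨0, by omega⟩
  simp only [Fin.castSucc_mk, Fin.succ_mk] at hedge
  rw [show X = p.node ⟨0, by omega⟩ from hfirst.symm]
  refine ⟨Walk.cons (p.dir ⟨0, by omega⟩) hedge w', ?_⟩
  simp only [OpenF_none_cons]
  exact hw'
@[simp] lemma Walk.dirs_cons {u v w : V} (b : Bool) (h) (t : Walk H v w) :
    (Walk.cons (u := u) b h t).dirs = b :: t.dirs := rfl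

lemma dirs_length : ∀ {u w : V} (w1 : Walk H u w), w1.dirs.length = w1.len
  | _, _, .nil => rfl
  | _, _, .cons _ _ t => by simp [Walk.len, dirs_length t]

lemma nodes_get_zero : ∀ {u y : V} (w1 : Walk H u y) (h : 0 < w1.nodes.length),
    w1.nodes.get ⟨0, h⟩ = u
  | _, _, .nil, _ => rfl
  | _, _, .cons _ _ _, _ => rfl

lemma nodes_get_last : ∀ {u y : V} (w1 : Walk H u y) (h : w1.len < w1.nodes.length),
    w1.nodes.get ⟨w1.len, h⟩ = y
  | _, _, .nil, _ => rfl
  | _, _, .cons b hb t, h => nodes_get_last t _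

lemma walk_adj : ∀ {u y : V} (w1 : Walk H u y) (i : ℕ) (hi : i < w1.len),
    cond (w1.dirs.get ⟨i, by rw [dirs_length]; exact hi⟩)
      (H.Edge (w1.nodes.get ⟨i, by rw [Walk.nodes_length]; omega⟩)
              (w1.nodes.get ⟨i + 1, by rw [Walk.nodes_length]; omega⟩))
      (H.Edge (w1.nodes.get ⟨i + 1, by rw [Walk.nodes_length]; omega⟩)
              (w1.nodes.get ⟨i, by rw [Walk.nodes_length]; omega⟩))
  | _, _, .nil, i, hi => by simp [Walk.len] at hi
  | u, y, .cons (v := v) b hb t, 0, hi => by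
      show cond b (H.Edge u (t.nodes.get ⟨0, by rw [Walk.nodes_length]; omega⟩))
        (H.Edge (t.nodes.get ⟨0, by rw [Walk.nodes_length]; omega⟩) u)
      rw [nodes_get_zero]
      exact hb
  | u, y, .cons (v := v) b hb t, (i + 1), hi =>
      walk_adj t i (by simp [Walk.len] at hi; omega)

lemma openF_get : ∀ {u y : V} (w1 : Walk H u y) (p₀ : V) (d₀ : Bool),
    OpenF H S P (some (p₀, d₀)) w1 → ∀ (i : ℕ) (hi : i + 1 < w1.nodes.length),
    OKn H S P ((p₀ :: w1.nodes).get ⟨i, by simp; omega⟩)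
      ((d₀ :: w1.dirs).get ⟨i, by simp [dirs_length]; rw [Walk.nodes_length] at hi; omega⟩)
      (w1.nodes.get ⟨i, by omega⟩)
      (w1.dirs.get ⟨i, by rw [dirs_length]; rw [Walk.nodes_length] at hi; omega⟩)
      (w1.nodes.get ⟨i + 1, hi⟩)
  | _, _, .nil, _, _, _, i, hi => by simp [Walk.nodes] at hi
  | u, y, .cons (v := v) b hb t, p₀, d₀, h, 0, hi => by
      show OKn H S P p₀ d₀ u b (t.nodes.get ⟨0, by rw [Walk.nodes_length]; omega⟩)
      rw [nodes_get_zero]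
      exact h.1
  | u, y, .cons (v := v) b hb t, p₀, d₀, h, (i + 1), hi =>
      openF_get t u b h.2 i (by rw [Walk.nodes_length] at hi ⊢; simp [Walk.len] at hi; omega)

/-- From an open walk without repeated nodes, an open `GPath`. -/
lemma gpath_of_walk {H : DiGraph V} {S : Set V} {P : V → V → Prop} {X Y : V} (hXY : X ≠ Y)
    (w : Walk H X Y) (hO : OpenF H S P none w) (hnd : w.nodes.Nodup) :
    ∃ p : GPath H X Y, GOKn S P p := by
  cases w with
  | nil => exact absurd rfl hXY
  | cons b hb t =>
    have hNlen : (Walk.cons b hb t).nodes.length = t.len + 2 := by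
      rw [Walk.nodes_length]; rfl
    have hDlen : (Walk.cons b hb t).dirs.length = t.len + 1 := by
      rw [dirs_length]; rfl
    refine ⟨⟨t.len,
      fun i => (Walk.cons b hb t).nodes.get (Fin.cast hNlen.symm i),
      fun i => (Walk.cons b hb t).dirs.get (Fin.cast hDlen.symm i),
      ?_, ?_, ?_, ?_⟩, ?_⟩
    · exact (List.nodup_iff_injective_get.mp hnd).comp (Fin.cast_injective _)
    · exact nodes_get_zero _ _
    · exact nodes_get_last (Walk.cons b hb t) _
    · intro i
      obtain ⟨iv, hiv⟩ := i
      have ha := walk_adj (Walk.cons b hb t) iv (by exact hiv)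
      constructor
      · intro hdt
        have hd' : (Walk.cons b hb t).dirs.get ⟨iv, by rw [hDlen]; omega⟩ = true := hdt
        rw [hd'] at ha
        exact ha
      · intro hdt
        have hd' : (Walk.cons b hb t).dirs.get ⟨iv, by rw [hDlen]; omega⟩ = false := hdt
        rw [hd'] at ha
        exact ha
    · intro j
      obtain ⟨jv, hjv⟩ := j
      have hjv' : jv < t.len := hjv
      exact openF_get t X b hO jv (by rw [Walk.nodes_length]; omega)

lemma open_gpath_iff_walk {H : DiGraph V} {S : Set V} {P : V → V → Prop} {X Y : V}
    (hXY : X ≠ Y) :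
    (∃ p : GPath H X Y, GOKn S P p) ↔ ∃ w : Walk H X Y, OpenF H S P none w := by
  constructor
  · rintro ⟨p, hp⟩
    exact walk_of_gpath p hp
  · rintro ⟨w, hw⟩
    obtain ⟨w', hO', hnd⟩ := surgery w hw
    exact gpath_of_walk hXY w' hO' hnd
/- ## Acyclification basics -/
section Acy
variable {G Ga : DiGraph V} {S : Set V}

/-- σ-exemption predicate. -/
def Psig (G : DiGraph V) : V → V → Prop := fun c x => x ∈ G.scc c
/-- d-exemption predicate (none). -/
def Pd : V → V → Prop := fun _ _ => False

lemma Ga_edge_reach (hGa : IsAcyclification G Ga) {u v : V} (h : Ga.Edge u v) :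
    G.reach u v := by
  by_cases hscc : u ∈ G.scc v
  · exact hscc.2
  · have hne : u ≠ v := fun he => Ga.loopless v (he ▸ h)
    obtain ⟨w, hw, he⟩ := (hGa.2.1 u v hne hscc).mp h
    exact Relation.ReflTransGen.head he hw.2

lemma Ga_reach (hGa : IsAcyclification G Ga) {u v : V} (h : Ga.reach u v) :
    G.reach u v := by
  induction h with
  | refl => exact Relation.ReflTransGen.refl
  | tail _ e ih => exact Relation.ReflTransGen.trans ih (Ga_edge_reach hGa e)

lemma Ga_anc (hGa : IsAcyclification G Ga) {u : V} (h : u ∈ Ga.anc S) : u ∈ G.anc S := by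
  obtain ⟨s, hs, hr⟩ := h
  exact ⟨s, hs, Ga_reach hGa hr⟩

lemma Ga_edge_cross (hGa : IsAcyclification G Ga) {u z w : V}
    (hw : w ∈ G.scc z) (he : G.Edge u w) (hu : u ∉ G.scc z) : Ga.Edge u z := by
  have hne : u ≠ z := fun he' => hu (he' ▸ G.mem_scc_self z)
  exact (hGa.2.1 u z hne hu).mpr ⟨w, hw, he⟩

lemma Ga_tourn (hGa : IsAcyclification G Ga) {x u : V} (h : u ∈ G.scc x) (hne : u ≠ x) :
    ∃ b : Bool, cond b (Ga.Edge x u) (Ga.Edge u x) := by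
  rcases hGa.2.2 u x hne h with ⟨h1, _⟩ | ⟨h2, _⟩
  · exact ⟨false, h1⟩
  · exact ⟨true, h2⟩

/-- Lemma C: the SCC of any `G`-ancestor of `S` meets the `Ga`-ancestors of `S`. -/
lemma lemmaC (hGa : IsAcyclification G Ga) {m : V} (h : m ∈ G.anc S) :
    ∃ z, z ∈ G.scc m ∧ z ∈ Ga.anc S := by
  obtain ⟨s, hs, hr⟩ := h
  induction hr using Relation.ReflTransGen.head_induction_on with
  | refl => exact ⟨s, G.mem_scc_self s, DiGraph.anc_of_mem hs⟩
  | head e hr ih =>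
    rename_i a c
    obtain ⟨z, hz, hza⟩ := ih
    by_cases hcs : c ∈ G.scc a
    · exact ⟨z, DiGraph.scc_eq hcs ▸ hz, hza⟩
    · have haz : a ∉ G.scc z := by
        intro haz
        exact hcs (DiGraph.scc_symm (DiGraph.scc_eq hz ▸ haz))
      have hedge : Ga.Edge a z := Ga_edge_cross hGa (DiGraph.scc_symm hz) e haz
      exact ⟨a, G.mem_scc_self a, DiGraph.anc_of_edge hedge hza⟩

end Acy

/- ## Expansion: d-open Ga-walks yield σ-open G-walks -/
section Expand
variable {G Ga : DiGraph V} {S : Set V}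

def Walk.allFalse : ∀ {u w : V}, Walk H u w → Prop
  | _, _, .nil => True
  | _, _, .cons b _ t => b = false ∧ t.allFalse

/-- Directed (all-`true`) σ-innocuous walk within an SCC. -/
lemma dirw {c : V} : ∀ {a : V}, G.reach a c → G.reach c a →
    ∃ ww : Walk G a c, ww.allTrue ∧ (a ≠ c → 0 < ww.len) ∧
      ∀ (p : V) (dp : Bool), (dp = false → a ∈ S → p ∈ G.scc a) →
        OpenF G S (Psig G) (some (p, dp)) ww := by
  intro a hac
  induction hac using Relation.ReflTransGen.head_induction_on with
  | refl =>
    intro _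
    exact ⟨Walk.nil, trivial, fun h => absurd rfl h, fun _ _ _ => by simp⟩
  | head e hr ih =>
    rename_i a x
    intro hca
    have hcx : G.reach c x := Relation.ReflTransGen.trans hca (Relation.ReflTransGen.single e)
    obtain ⟨ww, hT, _, hOp⟩ := ih hcx
    refine ⟨Walk.cons true e ww, ⟨rfl, hT⟩, fun _ => by simp [Walk.len], ?_⟩
    intro p dp hp
    rw [OpenF_some_cons]
    constructor
    · unfold OKn
      rw [if_neg (by simp)]
      refine ⟨fun hdp hs => hp hdp hs, fun _ _ => ?_⟩
      exact ⟨Relation.ReflTransGen.single e, Relation.ReflTransGen.trans hr hca⟩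
    · exact hOp a true (by simp)

/-- Reverse-directed (all-`false`) σ-innocuous walk within an SCC. -/
lemma dirw_rev {c : V} : ∀ {a : V}, G.reach c a → G.reach a c →
    ∃ ww : Walk G a c, (a ≠ c → 0 < ww.len) ∧
      (∀ e : Option (V × Bool), 0 < ww.len →
        ∃ q, ww.lastEntry e = some (q, false) ∧ q ∈ G.scc c) ∧
      ∀ (p : V) (dp : Bool), (dp = true → a ∈ G.anc S) →
          (dp = false → a ∈ S → p ∈ G.scc a) →
        OpenF G S (Psig G) (some (p, dp)) ww := by
  intro a hca
  induction hca with
  | refl =>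
    intro _
    exact ⟨Walk.nil, fun h => absurd rfl h, fun _ h => absurd h (by simp [Walk.len]), fun _ _ _ _ => by simp⟩
  | tail hcx e ih =>
    rename_i x a
    intro hac
    have hxc : G.reach x c := Relation.ReflTransGen.head e hac
    obtain ⟨t', hlen', hlast', hOp'⟩ := ih hxc
    have hasc : a ∈ G.scc c := ⟨Relation.ReflTransGen.tail hcx e, hac⟩
    have hxsc : x ∈ G.scc c := ⟨hcx, hxc⟩
    refine ⟨Walk.cons false e t', fun _ => by simp [Walk.len], ?_, ?_⟩
    · intro e0 _
      cases t' with
      | nil =>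
        exact ⟨a, rfl, hasc⟩
      | cons b2 h2 t2 =>
        obtain ⟨q, hq, hqs⟩ := hlast' (some (a, false)) (by simp [Walk.len])
        exact ⟨q, hq, hqs⟩
    · intro p dp hcol hp
      rw [OpenF_some_cons]
      constructor
      · unfold OKn
        by_cases hdp : dp = true
        · rw [if_pos ⟨hdp, rfl⟩]
          exact hcol hdp
        · rw [if_neg (by simp [hdp])]
          exact ⟨fun hdf hs => hp hdf hs, fun h => by cases h⟩
      · refine hOp' a false (by simp) ?_
        intro _ _
        exact (DiGraph.scc_eq hxsc).symm ▸ hasc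

lemma lastEntry_allFalse : ∀ {u w : V} (w1 : Walk H u w) (p : V), w1.allFalse →
    ∃ q, w1.lastEntry (some (p, false)) = some (q, false)
  | _, _, .nil, p, _ => ⟨p, rfl⟩
  | _, _, .cons b h t, p, hT => by
      obtain ⟨hb, ht⟩ := hT
      subst hb
      exact lastEntry_allFalse t _ ht
lemma lastEntry_append : ∀ {u v w : V} (w1 : Walk H u v) (w2 : Walk H v w)
    (e : Option (V × Bool)),
    (w1.append w2).lastEntry e = w2.lastEntry (w1.lastEntry e)
  | _, _, _, .nil, w2, e => rfl
  | _, _, _, .cons b h t, w2, e => lastEntry_append t w2 _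

/-- Expansion of a single `Ga`-edge into a σ-innocuous `G`-walk. -/
lemma exp_edge (hGa : IsAcyclification G Ga) {u v : V} (b : Bool)
    (hb : cond b (Ga.Edge u v) (Ga.Edge v u)) :
    ∃ expw : Walk G u v,
      (∀ e : Option (V × Bool), ∃ q, expw.lastEntry e = some (q, b)) ∧
      OpenF G S (Psig G) none expw ∧
      ∀ (p : V) (dp : Bool), (dp = true → b = false → u ∈ G.anc S) →
          (¬(dp = true ∧ b = false) → u ∉ S) →
        OpenF G S (Psig G) (some (p, dp)) expw := by
  cases b with
  | true =>
    have hgae : Ga.Edge u v := hb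
    have hne : u ≠ v := fun he => Ga.loopless v (he ▸ hgae)
    by_cases hscc : u ∈ G.scc v
    · obtain ⟨ww, hT, hlen, hOp⟩ := dirw (S := S) hscc.2 hscc.1
      have hpos : 0 < ww.len := hlen hne
      refine ⟨ww, ?_, ?_, ?_⟩
      · intro e
        cases ww with
        | nil => simp [Walk.len] at hpos
        | cons b2 h2 t2 =>
          obtain ⟨hb2, ht2⟩ := hT
          subst hb2
          exact lastEntry_allTrue t2 _ ht2
      · exact OpenF_weaken (hOp u true (by simp))
      · intro p dp _ hs
        have hns : u ∉ S := hs (by simp)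
        exact hOp p dp (fun _ hu => absurd hu hns)
    · obtain ⟨w, hw, he⟩ := (hGa.2.1 u v hne hscc).mp hgae
      obtain ⟨ww, hT, _, hOp⟩ := dirw (S := S) hw.2 hw.1
      have he' : cond true (G.Edge u w) (G.Edge w u) := he
      refine ⟨Walk.cons true he' ww, ?_, ?_, ?_⟩
      · intro e
        show ∃ q, ww.lastEntry (some (u, true)) = some (q, true)
        exact lastEntry_allTrue ww u hT
      · rw [OpenF_none_cons]
        exact hOp u true (by simp)
      · intro p dp _ hs
        have hns : u ∉ S := hs (by simp)
        rw [OpenF_some_cons]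
        refine ⟨?_, hOp u true (by simp)⟩
        unfold OKn
        rw [if_neg (by simp)]
        exact ⟨fun _ hu => absurd hu hns, fun _ hu => absurd hu hns⟩
  | false =>
    have hgae : Ga.Edge v u := hb
    have hne : v ≠ u := fun he => Ga.loopless u (he ▸ hgae)
    by_cases hscc : v ∈ G.scc u
    · -- u and v in the same SCC; reversed directed path
      have husv : u ∈ G.scc v := DiGraph.scc_symm hscc
      obtain ⟨ww, hlen, hlast, hOp⟩ := dirw_rev (S := S) husv.1 husv.2
      have hpos : 0 < ww.len := hlen (Ne.symm hne)
      refine ⟨ww, ?_, ?_, ?_⟩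
      · intro e
        obtain ⟨q, hq, _⟩ := hlast e hpos
        exact ⟨q, hq⟩
      · exact OpenF_weaken (hOp u false (by simp) (fun _ _ => G.mem_scc_self u))
      · intro p dp hcol hs
        refine hOp p dp (fun hdp => hcol hdp rfl) ?_
        intro hdp hu
        exact absurd hu (hs (by simp [hdp]))
    · obtain ⟨w, hw, he⟩ := (hGa.2.1 v u hne hscc).mp hgae
      -- w ∈ scc u, G.Edge v w ; walk u ⋯ w (reverse-directed) then edge v→w
      obtain ⟨ww, _, hlast, hOp⟩ := dirw_rev (S := S) (c := w) hw.2 hw.1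
      have he' : cond false (G.Edge w v) (G.Edge v w) := he
      refine ⟨ww.append (Walk.cons false he' Walk.nil), ?_, ?_, ?_⟩
      · intro e
        rw [lastEntry_append]
        exact ⟨w, rfl⟩
      · rw [OpenF_append]
        refine ⟨OpenF_weaken (hOp u false (by simp) (fun _ _ => G.mem_scc_self u)), ?_⟩
        cases ww with
        | nil => trivial
        | cons b2 h2 t2 =>
          obtain ⟨q, hq, hqs⟩ := hlast none (by simp [Walk.len])
          rw [hq, OpenF_some_cons]
          refine ⟨?_, by simp⟩
          unfold OKn
          rw [if_neg (by simp)]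
          exact ⟨fun _ _ => hqs, by simp⟩
      · intro p dp hcol hs
        rw [OpenF_append]
        have hns : dp = false → u ∉ S := fun hdp => hs (by simp [hdp])
        refine ⟨hOp p dp (fun hdp => hcol hdp rfl) (fun hdp hu => absurd hu (hns hdp)), ?_⟩
        cases ww with
        | nil =>
          show OpenF G S (Psig G) (some (p, dp)) (Walk.cons false he' Walk.nil)
          rw [OpenF_some_cons]
          refine ⟨?_, by simp⟩
          unfold OKn
          by_cases hdp : dp = true
          · rw [if_pos ⟨hdp, rfl⟩]
            exact hcol hdp rfl
          · rw [if_neg (by simp [hdp])]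
            have hdpf : dp = false := by
              cases dp
              · rfl
              · exact absurd rfl hdp
            exact ⟨fun _ hu => absurd hu (hns hdpf), by simp⟩
        | cons b2 h2 t2 =>
          obtain ⟨q, hq, hqs⟩ := hlast (some (p, dp)) (by simp [Walk.len])
          rw [hq, OpenF_some_cons]
          refine ⟨?_, by simp⟩
          unfold OKn
          rw [if_neg (by simp)]
          exact ⟨fun _ _ => hqs, by simp⟩

/-- Main expansion: a d-open `Ga`-walk yields a σ-open `G`-walk. -/
lemma expand (hGa : IsAcyclification G Ga) : ∀ {u Y : V} (W : Walk Ga u Y),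
    (∀ (p : V) (dp : Bool), OpenF Ga S Pd (some (p, dp)) W →
      ∀ q : V, ∃ Wg : Walk G u Y, OpenF G S (Psig G) (some (q, dp)) Wg) ∧
    (OpenF Ga S Pd none W → ∃ Wg : Walk G u Y, OpenF G S (Psig G) none Wg) := by
  intro u Y W
  induction W with
  | nil => exact ⟨fun p dp _ q => ⟨Walk.nil, by simp⟩, fun _ => ⟨Walk.nil, by simp⟩⟩
  | cons b hb W' ih =>
    obtain ⟨expw, hlastE, hnone, hsome⟩ := exp_edge (S := S) hGa b hb
    constructor
    · intro p dp h q
      rw [OpenF_some_cons] at h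
      obtain ⟨q', hq'⟩ := hlastE (some (q, dp))
      obtain ⟨Wg', hWg'⟩ := ih.1 _ b h.2 q'
      refine ⟨expw.append Wg', ?_⟩
      rw [OpenF_append, hq']
      refine ⟨?_, hWg'⟩
      apply hsome
      · intro hdp hbf
        have hh := h.1
        unfold OKn at hh
        rw [if_pos ⟨hdp, hbf⟩] at hh
        exact Ga_anc hGa hh
      · intro hncol hu
        have hh := h.1
        unfold OKn at hh
        rw [if_neg hncol] at hh
        cases hdp : dp with
        | false => exact hh.1 hdp hu
        | true =>
          cases hbv : b with
          | false => exact hncol ⟨hdp, hbv⟩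
          | true => exact hh.2 hbv hu
    · intro h
      rw [OpenF_none_cons] at h
      obtain ⟨q', hq'⟩ := hlastE none
      obtain ⟨Wg', hWg'⟩ := ih.1 _ b h q'
      refine ⟨expw.append Wg', ?_⟩
      rw [OpenF_append, hq']
      exact ⟨hnone, hWg'⟩
/- ## Main direction: σ-open G-walks yield d-open Ga-walks -/

lemma scc_trans_mem {G : DiGraph V} {a u v : V} (hu : u ∈ G.scc a) (hv : v ∈ G.scc u) :
    v ∈ G.scc a := (DiGraph.scc_eq hu) ▸ hv

lemma OKn_collider {H : DiGraph V} {S : Set V} {P : V → V → Prop} {p c n : V}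
    (h : OKn H S P p true c false n) : c ∈ H.anc S := by
  unfold OKn at h
  rwa [if_pos ⟨rfl, rfl⟩] at h

lemma OKn_nc1 {H : DiGraph V} {S : Set V} {P : V → V → Prop} {p c n : V} {b : Bool}
    (h : OKn H S P p false c b n) : c ∈ S → P c p := by
  unfold OKn at h
  rw [if_neg (by simp)] at h
  exact fun hs => h.1 rfl hs

lemma OKn_nc2 {H : DiGraph V} {S : Set V} {P : V → V → Prop} {p c n : V} {d : Bool}
    (h : OKn H S P p d c true n) : c ∈ S → P c n := by
  unfold OKn at h
  rw [if_neg (by simp)] at h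
  exact h.2 rfl

lemma OKn_out_notS {H : DiGraph V} {S : Set V} {P : V → V → Prop} {p c n : V} {d : Bool}
    (h : OKn H S P p d c true n) (hP : ¬ P c n) : c ∉ S :=
  fun hs => hP (OKn_nc2 h hs)

/-- The OKn of a non-collider whose node is not in `S`. -/
lemma OKn_of_notS {H : DiGraph V} {S : Set V} {P : V → V → Prop} {p c n : V} {d b : Bool}
    (hnc : ¬(d = true ∧ b = false)) (hns : c ∉ S) : OKn H S P p d c b n := by
  unfold OKn
  rw [if_neg hnc]
  exact ⟨fun _ hs => absurd hs hns, fun _ hs => absurd hs hns⟩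

/-- "`z` admits a d-open `Ga`-walk to `Y` that stays open when an arrow into `z`
is prepended". -/
def ExtIn (Ga : DiGraph V) (S : Set V) (z Y : V) : Prop :=
  ∃ R : Walk Ga z Y, ∀ u' : V, OpenF Ga S Pd (some (u', true)) R

section MainRec
variable {G Ga : DiGraph V} {S : Set V}

lemma bigrec (hGa : IsAcyclification G Ga) : ∀ n : ℕ,
    (∀ (X Y : V) (W : Walk G X Y), W.len ≤ n → OpenF G S (Psig G) none W →
        ∃ R : Walk Ga X Y, OpenF Ga S Pd none R) ∧
    (∀ (X₀ u Y : V) (W : Walk G u Y) (p : V) (dp : Bool), W.len ≤ n →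
        OpenF G S (Psig G) (some (p, dp)) W → u ∈ G.scc X₀ →
        ∃ R : Walk Ga X₀ Y, OpenF Ga S Pd none R) ∧
    (∀ (a u Y : V) (W : Walk G u Y) (p : V) (dp : Bool), W.len ≤ n →
        OpenF G S (Psig G) (some (p, dp)) W → u ∈ G.scc a →
        ((∃ m, m ∈ G.scc a ∧ m ∈ G.anc S) ∨ dp = true) →
        ∃ z, z ∈ G.scc a ∧ ExtIn Ga S z Y) ∧
    (∀ (a Y : V) (W : Walk G a Y) (c₀ : V), W.len ≤ n →
        OpenF G S (Psig G) (some (c₀, true)) W →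
        ∃ z, z ∈ G.scc a ∧ ExtIn Ga S z Y) := by
  intro n
  induction n using Nat.strong_induction_on with
  | _ n ihn =>
  -- recursive access
  have ihMAIN : ∀ (X Y : V) (W : Walk G X Y), W.len < n → OpenF G S (Psig G) none W →
      ∃ R : Walk Ga X Y, OpenF Ga S Pd none R :=
    fun X Y W hlen hO => (ihn W.len hlen).1 X Y W le_rfl hO
  have ihHB : ∀ (X₀ u Y : V) (W : Walk G u Y) (p : V) (dp : Bool), W.len < n →
      OpenF G S (Psig G) (some (p, dp)) W → u ∈ G.scc X₀ →
      ∃ R : Walk Ga X₀ Y, OpenF Ga S Pd none R :=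
    fun X₀ u Y W p dp hlen hO hu => (ihn W.len hlen).2.1 X₀ u Y W p dp le_rfl hO hu
  have ihHB2 : ∀ (a u Y : V) (W : Walk G u Y) (p : V) (dp : Bool), W.len < n →
      OpenF G S (Psig G) (some (p, dp)) W → u ∈ G.scc a →
      ((∃ m, m ∈ G.scc a ∧ m ∈ G.anc S) ∨ dp = true) →
      ∃ z, z ∈ G.scc a ∧ ExtIn Ga S z Y :=
    fun a u Y W p dp hlen hO hu hinv => (ihn W.len hlen).2.2.1 a u Y W p dp le_rfl hO hu hinv
  have ihLIN : ∀ (a Y : V) (W : Walk G a Y) (c₀ : V), W.len < n →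
      OpenF G S (Psig G) (some (c₀, true)) W →
      ∃ z, z ∈ G.scc a ∧ ExtIn Ga S z Y :=
    fun a Y W c₀ hlen hO => (ihn W.len hlen).2.2.2 a Y W c₀ le_rfl hO
  -- LIN at level n
  have LIN : ∀ (a Y : V) (W : Walk G a Y) (c₀ : V), W.len ≤ n →
      OpenF G S (Psig G) (some (c₀, true)) W →
      ∃ z, z ∈ G.scc a ∧ ExtIn Ga S z Y := by
    intro a Y W c₀ hlen hO
    cases W with
    | nil => exact ⟨a, G.mem_scc_self a, Walk.nil, fun _ => by simp⟩
    | cons b hb W'' =>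
      rename_i v
      have hlt : W''.len < n := by simp [Walk.len] at hlen; omega
      rw [OpenF_some_cons] at hO
      by_cases hv : v ∈ G.scc a
      · -- within-SCC first step
        cases b with
        | true => exact ihHB2 a v Y W'' a true hlt hO.2 hv (Or.inr rfl)
        | false =>
          have hanc : a ∈ G.anc S := OKn_collider hO.1
          exact ihHB2 a v Y W'' a false hlt hO.2 hv (Or.inl ⟨a, G.mem_scc_self a, hanc⟩)
      · cases b with
        | true =>
          -- cross-out at a
          have hna : a ∉ S := OKn_out_notS hO.1 hv
          obtain ⟨z', hz', R', hR'⟩ := ihLIN v Y W'' a hlt hO.2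
          have hedge : Ga.Edge a z' := by
            refine Ga_edge_cross hGa (DiGraph.scc_symm hz') hb ?_
            intro haz
            exact hv (DiGraph.scc_symm ((DiGraph.scc_eq hz') ▸ haz))
          refine ⟨a, G.mem_scc_self a, Walk.cons true hedge R', ?_⟩
          intro u'
          rw [OpenF_some_cons]
          exact ⟨OKn_of_notS (by simp) hna, hR' a⟩
        | false =>
          -- cross-in at a : collider
          have hanc : a ∈ G.anc S := OKn_collider hO.1
          obtain ⟨z, hz, hzGa⟩ := lemmaC hGa hanc
          have hedgeGa : Ga.Edge v z := by
            refine Ga_edge_cross hGa (w := a) (DiGraph.scc_symm hz) hb ?_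
            intro hvz
            exact hv ((DiGraph.scc_eq hz) ▸ hvz)
          cases W'' with
          | nil =>
            refine ⟨z, hz, Walk.cons false hedgeGa Walk.nil, ?_⟩
            intro u'
            rw [OpenF_some_cons]
            refine ⟨?_, by simp⟩
            unfold OKn
            rw [if_pos ⟨rfl, rfl⟩]
            exact hzGa
          | cons b2 h2 W''' =>
            have hnv : v ∉ S := by
              intro hs
              have := OKn_nc1 hO.2.1 hs
              exact hv (DiGraph.scc_symm this)
            obtain ⟨M, hM⟩ := ihMAIN v Y (Walk.cons b2 h2 W''')
              (by simp [Walk.len] at hlen ⊢; omega) (OpenF_weaken hO.2)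
            refine ⟨z, hz, Walk.cons false hedgeGa M, ?_⟩
            intro u'
            rw [OpenF_some_cons]
            refine ⟨?_, OpenF_strengthen hnv hM z⟩
            unfold OKn
            rw [if_pos ⟨rfl, rfl⟩]
            exact hzGa
  -- HB2 at level n
  have HB2 : ∀ (a u Y : V) (W : Walk G u Y) (p : V) (dp : Bool), W.len ≤ n →
      OpenF G S (Psig G) (some (p, dp)) W → u ∈ G.scc a →
      ((∃ m, m ∈ G.scc a ∧ m ∈ G.anc S) ∨ dp = true) →
      ∃ z, z ∈ G.scc a ∧ ExtIn Ga S z Y := by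
    intro a u Y W p dp hlen hO hu hinv
    cases W with
    | nil => exact ⟨u, hu, Walk.nil, fun _ => by simp⟩
    | cons b hb W'' =>
      rename_i v
      have hlt : W''.len < n := by simp [Walk.len] at hlen; omega
      rw [OpenF_some_cons] at hO
      by_cases hv : v ∈ G.scc u
      · -- within-SCC step
        have hva : v ∈ G.scc a := scc_trans_mem hu hv
        cases b with
        | true => exact ihHB2 a v Y W'' u true hlt hO.2 hva (Or.inr rfl)
        | false =>
          cases hdp : dp with
          | true =>
            subst hdp
            have hanc : u ∈ G.anc S := OKn_collider hO.1
            exact ihHB2 a v Y W'' u false hlt hO.2 hva (Or.inl ⟨u, hu, hanc⟩)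
          | false =>
            subst hdp
            rcases hinv with hseed | h
            · exact ihHB2 a v Y W'' u false hlt hO.2 hva (Or.inl hseed)
            · exact absurd h (by simp)
      · cases b with
        | true =>
          -- cross-out at u
          have hnu : u ∉ S := OKn_out_notS hO.1 hv
          obtain ⟨z', hz', R', hR'⟩ := ihLIN v Y W'' u hlt hO.2
          have hedge : Ga.Edge u z' := by
            refine Ga_edge_cross hGa (DiGraph.scc_symm hz') hb ?_
            intro huz
            exact hv (DiGraph.scc_symm ((DiGraph.scc_eq hz') ▸ huz))
          refine ⟨u, hu, Walk.cons true hedge R', ?_⟩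
          intro u'
          rw [OpenF_some_cons]
          exact ⟨OKn_of_notS (by simp) hnu, hR' u⟩
        | false =>
          -- cross-in at u
          have seed : ∃ m, m ∈ G.scc a ∧ m ∈ G.anc S := by
            rcases hinv with hseed | hdp
            · exact hseed
            · subst hdp
              exact ⟨u, hu, OKn_collider hO.1⟩
          obtain ⟨m, hm, hmanc⟩ := seed
          obtain ⟨z, hzm, hzGa⟩ := lemmaC hGa hmanc
          have hza : z ∈ G.scc a := scc_trans_mem hm hzm
          have huz : u ∈ G.scc z := (DiGraph.scc_eq hza).symm ▸ hu
          have hedgeGa : Ga.Edge v z := by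
            refine Ga_edge_cross hGa huz hb ?_
            intro hvz
            exact hv ((DiGraph.scc_eq huz).symm ▸ hvz)
          cases W'' with
          | nil =>
            refine ⟨z, hza, Walk.cons false hedgeGa Walk.nil, ?_⟩
            intro u'
            rw [OpenF_some_cons]
            refine ⟨?_, by simp⟩
            unfold OKn
            rw [if_pos ⟨rfl, rfl⟩]
            exact hzGa
          | cons b2 h2 W''' =>
            have hnv : v ∉ S := by
              intro hs
              have := OKn_nc1 hO.2.1 hs
              exact hv (DiGraph.scc_symm this)
            obtain ⟨M, hM⟩ := ihMAIN v Y (Walk.cons b2 h2 W''')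
              (by simp [Walk.len] at hlen ⊢; omega) (OpenF_weaken hO.2)
            refine ⟨z, hza, Walk.cons false hedgeGa M, ?_⟩
            intro u'
            rw [OpenF_some_cons]
            refine ⟨?_, OpenF_strengthen hnv hM z⟩
            unfold OKn
            rw [if_pos ⟨rfl, rfl⟩]
            exact hzGa
  -- HB at level n
  have HB : ∀ (X₀ u Y : V) (W : Walk G u Y) (p : V) (dp : Bool), W.len ≤ n →
      OpenF G S (Psig G) (some (p, dp)) W → u ∈ G.scc X₀ →
      ∃ R : Walk Ga X₀ Y, OpenF Ga S Pd none R := by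
    intro X₀ u Y W p dp hlen hO hu
    cases W with
    | nil =>
      by_cases hXY : X₀ = u
      · subst hXY
        exact ⟨Walk.nil, by simp⟩
      · obtain ⟨bt, hbt⟩ := Ga_tourn hGa hu (fun h => hXY h.symm)
        exact ⟨Walk.cons bt hbt Walk.nil, by cases bt <;> simp⟩
    | cons b hb W'' =>
      rename_i v
      have hlt : W''.len < n := by simp [Walk.len] at hlen; omega
      rw [OpenF_some_cons] at hO
      by_cases hv : v ∈ G.scc u
      · exact ihHB X₀ v Y W'' u b hlt hO.2 (scc_trans_mem hu hv)
      · cases b with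
        | true =>
          have hnu : u ∉ S := OKn_out_notS hO.1 hv
          obtain ⟨z', hz', R', hR'⟩ := ihLIN v Y W'' u hlt hO.2
          have hedge : Ga.Edge u z' := by
            refine Ga_edge_cross hGa (DiGraph.scc_symm hz') hb ?_
            intro huz
            exact hv (DiGraph.scc_symm ((DiGraph.scc_eq hz') ▸ huz))
          by_cases hX : X₀ = u
          · subst hX
            exact ⟨Walk.cons true hedge R', hR' X₀⟩
          · obtain ⟨bt, hbt⟩ := Ga_tourn hGa hu (fun h => hX h.symm)
            refine ⟨Walk.cons bt hbt (Walk.cons true hedge R'), ?_⟩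
            rw [OpenF_none_cons, OpenF_some_cons]
            exact ⟨OKn_of_notS (by simp) hnu, hR' u⟩
        | false =>
          have hvX : v ∉ G.scc X₀ := by
            intro hvX
            exact hv ((DiGraph.scc_eq hu).symm ▸ hvX)
          have hedgeGa : Ga.Edge v X₀ := Ga_edge_cross hGa hu hb hvX
          cases W'' with
          | nil => exact ⟨Walk.cons false hedgeGa Walk.nil, by simp⟩
          | cons b2 h2 W''' =>
            have hnv : v ∉ S := by
              intro hs
              have := OKn_nc1 hO.2.1 hs
              exact hv (DiGraph.scc_symm this)
            obtain ⟨M, hM⟩ := ihMAIN v Y (Walk.cons b2 h2 W''')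
              (by simp [Walk.len] at hlen ⊢; omega) (OpenF_weaken hO.2)
            refine ⟨Walk.cons false hedgeGa M, ?_⟩
            rw [OpenF_none_cons]
            exact OpenF_strengthen hnv hM X₀
  -- MAIN at level n
  have MAIN : ∀ (X Y : V) (W : Walk G X Y), W.len ≤ n → OpenF G S (Psig G) none W →
      ∃ R : Walk Ga X Y, OpenF Ga S Pd none R := by
    intro X Y W hlen hO
    cases W with
    | nil => exact ⟨Walk.nil, by simp⟩
    | cons b hb W' =>
      rename_i v
      have hlt : W'.len < n := by simp [Walk.len] at hlen; omega
      rw [OpenF_none_cons] at hO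
      by_cases hv : v ∈ G.scc X
      · exact ihHB X v Y W' X b hlt hO hv
      · cases b with
        | true =>
          obtain ⟨z', hz', R', hR'⟩ := ihLIN v Y W' X hlt hO
          have hedge : Ga.Edge X z' := by
            refine Ga_edge_cross hGa (DiGraph.scc_symm hz') hb ?_
            intro hXz
            exact hv (DiGraph.scc_symm ((DiGraph.scc_eq hz') ▸ hXz))
          refine ⟨Walk.cons true hedge R', ?_⟩
          rw [OpenF_none_cons]
          exact hR' X
        | false =>
          have hedgeGa : Ga.Edge v X := Ga_edge_cross hGa (G.mem_scc_self X) hb hv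
          cases W' with
          | nil => exact ⟨Walk.cons false hedgeGa Walk.nil, by simp⟩
          | cons b2 h2 W''' =>
            have hnv : v ∉ S := by
              intro hs
              have := OKn_nc1 hO.1 hs
              exact hv (DiGraph.scc_symm this)
            obtain ⟨M, hM⟩ := ihMAIN v Y (Walk.cons b2 h2 W''')
              (by simp [Walk.len] at hlen ⊢; omega) (OpenF_weaken hO)
            refine ⟨Walk.cons false hedgeGa M, ?_⟩
            rw [OpenF_none_cons]
            exact OpenF_strengthen hnv hM X
  exact ⟨MAIN, HB, HB2, LIN⟩

/-- σ-open G-walk between `X` and `Y` yields a d-open `Ga`-walk. -/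
lemma main_direction (hGa : IsAcyclification G Ga) {X Y : V} (W : Walk G X Y)
    (hO : OpenF G S (Psig G) none W) : ∃ R : Walk Ga X Y, OpenF Ga S Pd none R :=
  ((bigrec hGa W.len).1) X Y W le_rfl hO

end MainRec
end Expand

/-- σ-separation in `G` coincides with d-separation in the acyclification. -/
lemma sepEquiv {G Ga : DiGraph V} (hGa : IsAcyclification G Ga) (A B : V) (hAB : A ≠ B)
    (S : Set V) : G.sigmaSep A B S ↔ Ga.dSep A B S := by
  have h1 : (∃ p : GPath G A B, ¬ p.sigmaBlocked S) ↔ ∃ p : GPath Ga A B, ¬ p.dBlocked S := by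
    constructor
    · rintro ⟨p, hp⟩
      have hok : GOKn S (Psig G) p := (not_sigmaBlocked_iff p S).mp hp
      obtain ⟨w, hw⟩ := walk_of_gpath p hok
      obtain ⟨R, hR⟩ := main_direction hGa w hw
      obtain ⟨q, hq⟩ := (open_gpath_iff_walk (S := S) (P := Pd) hAB).mpr ⟨R, hR⟩
      exact ⟨q, (not_dBlocked_iff q S).mpr hq⟩
    · rintro ⟨p, hp⟩
      have hok : GOKn S Pd p := (not_dBlocked_iff p S).mp hp
      obtain ⟨w, hw⟩ := walk_of_gpath p hok
      obtain ⟨Wg, hWg⟩ := (expand hGa w).2 hw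
      obtain ⟨q, hq⟩ := (open_gpath_iff_walk (S := S) (P := Psig G) hAB).mpr ⟨Wg, hWg⟩
      exact ⟨q, (not_sigmaBlocked_iff q S).mpr hq⟩
  constructor
  · intro h p
    by_contra hp
    obtain ⟨p', hp'⟩ := h1.mpr ⟨p, hp⟩
    exact hp' (h p')
  · intro h p
    by_contra hp
    obtain ⟨p', hp'⟩ := h1.mp ⟨p, hp⟩
    exact hp' (h p')

/-- Invariance of witness variables (the R1 and R2
conditions) under σ-acyclification. -/
theorem witness_invariance_acyclification {V : Type} [Fintype V]
    (G Ga : DiGraph V) (Obs Lat : Set V)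
    (hpart : Obs ∪ Lat = Set.univ) (hdisj : Obs ∩ Lat = ∅)
    (hGa : IsAcyclification G Ga)
    (X Y : V) (hX : X ∈ Obs) (hY : Y ∈ Obs) (hXY : X ≠ Y)
    (MBX MBY MBX' MBY' : Set V)
    (hMBX : G.IsSigmaMB Obs X MBX) (hMBY : G.IsSigmaMB Obs Y MBY)
    (hMBX' : Ga.IsDMB Obs X MBX') (hMBY' : Ga.IsDMB Obs Y MBY') :
    ((∃ W ∈ MBX \ {Y}, ∃ Z ⊆ MBY \ {X, W},
        ¬ G.sigmaSep W Y Z ∧ G.sigmaSep W Y (Z ∪ {X})) ↔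
      (∃ W ∈ MBX' \ {Y}, ∃ Z ⊆ MBY' \ {X, W},
        ¬ Ga.dSep W Y Z ∧ Ga.dSep W Y (Z ∪ {X}))) ∧
    ((∃ W ∈ MBX \ {Y}, ∃ Z ⊆ MBY \ {X, W},
        ¬ G.sigmaSep W X Z ∧ G.sigmaSep W Y Z) ↔
      (∃ W ∈ MBX' \ {Y}, ∃ Z ⊆ MBY' \ {X, W},
        ¬ Ga.dSep W X Z ∧ Ga.dSep W Y Z)) := by
  have sepEq : ∀ (A B : V) (S' : Set V), A ≠ B → (G.sigmaSep A B S' ↔ Ga.dSep A B S') :=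
    fun A B S' h => sepEquiv hGa A B h S'
  -- the two Markov blankets agree
  have hMBXeq : MBX = MBX' := by
    apply Set.Subset.antisymm
    · apply hMBX.2.2 MBX' hMBX'.1
      intro W hW
      have hne : X ≠ W := by
        intro h
        exact hW.2 (Or.inr (by simp [h]))
      exact (sepEq X W MBX' hne).mpr (hMBX'.2.1 W hW)
    · apply hMBX'.2.2 MBX hMBX.1
      intro W hW
      have hne : X ≠ W := by
        intro h
        exact hW.2 (Or.inr (by simp [h]))
      exact (sepEq X W MBX hne).mp (hMBX.2.1 W hW)
  have hMBYeq : MBY = MBY' := by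
    apply Set.Subset.antisymm
    · apply hMBY.2.2 MBY' hMBY'.1
      intro W hW
      have hne : Y ≠ W := by
        intro h
        exact hW.2 (Or.inr (by simp [h]))
      exact (sepEq Y W MBY' hne).mpr (hMBY'.2.1 W hW)
    · apply hMBY'.2.2 MBY hMBY.1
      intro W hW
      have hne : Y ≠ W := by
        intro h
        exact hW.2 (Or.inr (by simp [h]))
      exact (sepEq Y W MBY hne).mp (hMBY.2.1 W hW)
  subst hMBXeq
  subst hMBYeq
  constructor
  · constructor
    · rintro ⟨W, hW, Z, hZ, hns, hs⟩
      have hWY : W ≠ Y := by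
        intro h
        exact hW.2 (by simp [h])
      refine ⟨W, hW, Z, hZ, ?_, (sepEq W Y (Z ∪ {X}) hWY).mp hs⟩
      intro hc
      exact hns ((sepEq W Y Z hWY).mpr hc)
    · rintro ⟨W, hW, Z, hZ, hns, hs⟩
      have hWY : W ≠ Y := by
        intro h
        exact hW.2 (by simp [h])
      refine ⟨W, hW, Z, hZ, ?_, (sepEq W Y (Z ∪ {X}) hWY).mpr hs⟩
      intro hc
      exact hns ((sepEq W Y Z hWY).mp hc)
  · constructor
    · rintro ⟨W, hW, Z, hZ, hns, hs⟩
      have hWY : W ≠ Y := by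
        intro h
        exact hW.2 (by simp [h])
      have hWX : W ≠ X := by
        intro h
        exact ((hMBX.1 hW.1).2) (by simp [h])
      refine ⟨W, hW, Z, hZ, ?_, (sepEq W Y Z hWY).mp hs⟩
      intro hc
      exact hns ((sepEq W X Z hWX).mpr hc)
    · rintro ⟨W, hW, Z, hZ, hns, hs⟩
      have hWY : W ≠ Y := by
        intro h
        exact hW.2 (by simp [h])
      have hWX : W ≠ X := by
        intro h
        exact ((hMBX.1 hW.1).2) (by simp [h])
      refine ⟨W, hW, Z, hZ, ?_, (sepEq W Y Z hWY).mpr hs⟩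
      intro hc
      exact hns ((sepEq W X Z hWX).mp hc)
end

section
/- Soundness of rule R1 in possibly cyclic graphs: let G=(V,E) be a directed graph, possibly cyclic, whose node set is partitioned as V = O ∪ L into observed and latent nodes, with distinct observed nodes X,Y ∈ O satisfying the pre-treatment assumption (De(Y)=∅ and Ch(X) ⊆ {Y}). Suppose there exist a node W ∈ MB_σ^G(X)\{Y} and a set Z ⊆ MB_σ^G(Y)\{X,W} such that W is not σ-separated from Y given Z in G and W is σ-separated from Y given Z ∪ {X} in G. Then the edge X→Y belongs to E and Z is a backdoor adjustment set for (X,Y) in G. -/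
section R1Aux

variable {V : Type}

open DiGraph

/-- Edge between `A` and `B` oriented according to `d`. -/
def edgeDir (G : DiGraph V) (d : Bool) (A B : V) : Prop :=
  (d = true → G.Edge A B) ∧ (d = false → G.Edge B A)

/-- The σ-blocking condition at an interior node `B` with left neighbour `A`
(edge direction `d`) and right neighbour `C` (edge direction `e`). -/
def blockAt (G : DiGraph V) (S : Set V) (d e : Bool) (A B C : V) : Prop :=
  ((d = true ∧ e = false) ∧ B ∉ G.anc S) ∨
  (¬(d = true ∧ e = false) ∧ B ∈ S ∧
    ((e = true ∧ C ∉ G.scc B) ∨ (d = false ∧ A ∉ G.scc B)))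

/-- A walk (nodes may repeat). -/
structure GWalk (G : DiGraph V) (X Y : V) where
  k : ℕ
  node : ℕ → V
  dir : ℕ → Bool
  first : node 0 = X
  last : node (k + 1) = Y
  adj : ∀ i, i ≤ k → edgeDir G (dir i) (node i) (node (i + 1))

def GWalk.Blocked {G : DiGraph V} {X Y : V} (w : GWalk G X Y) (S : Set V) : Prop :=
  ∃ t, t < w.k ∧
    blockAt G S (w.dir t) (w.dir (t + 1)) (w.node t) (w.node (t + 1)) (w.node (t + 2))

lemma anc_mono {G : DiGraph V} {S T : Set V} (h : S ⊆ T) : G.anc S ⊆ G.anc T :=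
  fun _ ⟨s, hs, r⟩ => ⟨s, h hs, r⟩

lemma fin_congr {n : ℕ} {α : Type} (f : Fin n → α) {a b : Fin n} (h : a.val = b.val) :
    f a = f b := congrArg f (Fin.ext h)

lemma GWalk.not_blocked_insert {G : DiGraph V} {A B : V} (w : GWalk G A B) (S : Set V)
    (x : V) (hx : ∀ t, 1 ≤ t → t ≤ w.k → w.node t ≠ x) (h : ¬ w.Blocked S) :
    ¬ w.Blocked (S ∪ {x}) := by
  rintro ⟨t, ht, hb⟩
  apply h
  refine ⟨t, ht, ?_⟩
  rcases hb with ⟨hc, hanc⟩ | ⟨hnc, hmem, hd⟩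
  · exact Or.inl ⟨hc, fun hm => hanc (anc_mono Set.subset_union_left hm)⟩
  · refine Or.inr ⟨hnc, ?_, hd⟩
    rcases hmem with hmem | hmem
    · exact hmem
    · exact absurd hmem (hx (t + 1) (by omega) (by omega))

lemma reach_chain {G : DiGraph V} {A B : V} (w : GWalk G A B) (a : ℕ) :
    ∀ b, a ≤ b → b ≤ w.k + 1 → (∀ s, a ≤ s → s < b → w.dir s = true) →
      G.reach (w.node a) (w.node b) := by
  intro b
  induction b with
  | zero =>
    intro h _ _
    have ha : a = 0 := by omega
    subst ha; exact Relation.ReflTransGen.refl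
  | succ b ih =>
    intro hab hbk hd
    rcases Nat.lt_or_ge a (b + 1) with h | h
    · have hab' : a ≤ b := by omega
      have step : G.Edge (w.node b) (w.node (b + 1)) :=
        (w.adj b (by omega)).1 (hd b hab' (by omega))
      exact Relation.ReflTransGen.tail (ih hab' (by omega) fun s h1 h2 => hd s h1 (by omega)) step
    · have : a = b + 1 := by omega
      subst this; exact Relation.ReflTransGen.refl

/-- The spliced walk: remove the segment between positions `i` and `i + D`
(which carry the same node). -/
def spliceWalk {G : DiGraph V} {A B : V} (w : GWalk G A B) (i D : ℕ)
    (hD1 : 1 ≤ D) (hiD : i + D ≤ w.k + 1) (hDk : D ≤ w.k)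
    (heq : w.node i = w.node (i + D)) : GWalk G A B where
  k := w.k - D
  node m := if m ≤ i then w.node m else w.node (m + D)
  dir m := if m < i then w.dir m else w.dir (m + D)
  first := by simp [w.first]
  last := by
    beta_reduce
    by_cases h : w.k - D + 1 ≤ i
    · have h1 : w.k - D + 1 = i := by omega
      rw [if_pos h, h1, heq, show i + D = w.k + 1 by omega, w.last]
    · rw [if_neg h, show w.k - D + 1 + D = w.k + 1 by omega, w.last]
  adj m hm := by
    beta_reduce
    rcases lt_trichotomy m i with h | h | h
    · rw [if_pos h, if_pos (le_of_lt h), if_pos (by omega : m + 1 ≤ i)]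
      exact w.adj m (by omega)
    · subst h
      rw [if_neg (lt_irrefl m), if_pos (le_refl m), if_neg (by omega : ¬ (m + 1 ≤ m)),
        show m + 1 + D = m + D + 1 by omega, heq]
      exact w.adj (m + D) (by omega)
    · rw [if_neg (by omega : ¬ (m < i)), if_neg (by omega : ¬ (m ≤ i)),
        if_neg (by omega : ¬ (m + 1 ≤ i)), show m + 1 + D = m + D + 1 by omega]
      exact w.adj (m + D) (by omega)

lemma spliceWalk_not_blocked {G : DiGraph V} {A B : V} (w : GWalk G A B) (i D : ℕ)
    (hD1 : 1 ≤ D) (hiD : i + D ≤ w.k + 1) (hDk : D ≤ w.k)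
    (heq : w.node i = w.node (i + D)) (S : Set V) (hw : ¬ w.Blocked S) :
    ¬ (spliceWalk w i D hD1 hiD hDk heq).Blocked S := by
  rintro ⟨t, ht, hb⟩
  simp only [spliceWalk] at ht hb
  rcases lt_trichotomy (t + 1) i with h | h | h
  · -- entirely in the first part
    rw [if_pos (by omega : t < i), if_pos (by omega : t + 1 < i),
      if_pos (by omega : t ≤ i), if_pos (by omega : t + 1 ≤ i),
      if_pos (by omega : t + 2 ≤ i)] at hb
    exact hw ⟨t, by omega, hb⟩
  · -- junction case
    have hi1 : 1 ≤ i := by omega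
    have hik : i ≤ w.k - D := by omega
    have hjk : i + D ≤ w.k := by omega
    rw [if_pos (by omega : t < i), if_neg (by omega : ¬ (t + 1 < i)),
      if_pos (by omega : t ≤ i), if_pos (by omega : t + 1 ≤ i),
      if_neg (by omega : ¬ (t + 2 ≤ i)), show t + 2 + D = i + D + 1 by omega,
      show t + 1 = i by omega] at hb
    -- hb : blockAt G S (w.dir t) (w.dir (i + D)) (w.node t) (w.node i) (w.node (i + D + 1))
    have ht' : t = i - 1 := by omega
    have hA1 : ¬ blockAt G S (w.dir t) (w.dir i) (w.node t) (w.node i) (w.node (i + 1)) := by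
      intro hc
      apply hw
      exact ⟨t, by omega, by rw [show t + 1 = i by omega, show t + 2 = i + 1 by omega]; exact hc⟩
    have hA2 : ¬ blockAt G S (w.dir (i + D - 1)) (w.dir (i + D)) (w.node (i + D - 1))
        (w.node (i + D)) (w.node (i + D + 1)) := by
      intro hc
      apply hw
      exact ⟨i + D - 1, by omega, by
        rw [show i + D - 1 + 1 = i + D by omega, show i + D - 1 + 2 = i + D + 1 by omega]
        exact hc⟩
    rcases hb with ⟨⟨hd, he⟩, hv⟩ | ⟨hnc, hvS, hdisj⟩
    · -- collider at the junction
      have hdi : w.dir i = true := by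
        cases hdi : w.dir i
        · exact absurd (Or.inl ⟨⟨hd, hdi⟩, hv⟩) hA1
        · rfl
      have hdj : w.dir (i + D - 1) = false := by
        cases hdj : w.dir (i + D - 1)
        · rfl
        · exact absurd (Or.inl ⟨⟨hdj, he⟩, heq ▸ hv⟩) hA2
      have hij1 : i < i + D - 1 := by
        rcases Nat.lt_or_ge i (i + D - 1) with h' | h'
        · exact h'
        · exfalso; have : i = i + D - 1 := by omega
          rw [← this] at hdj; rw [hdi] at hdj; exact Bool.noConfusion hdj
      have hPex : ∃ s, i < s ∧ s ≤ i + D - 1 ∧ w.dir s = false :=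
        ⟨i + D - 1, hij1, le_refl _, hdj⟩
      classical
      set m := Nat.find hPex with hm
      obtain ⟨him, hmj, hdm⟩ := Nat.find_spec hPex
      have hall : ∀ s, i ≤ s → s < m → w.dir s = true := by
        intro s hs1 hs2
        rcases Nat.eq_or_lt_of_le hs1 with h' | h'
        · rw [← h']; exact hdi
        · cases hds : w.dir s
          · exact absurd ⟨h', by omega, hds⟩ (Nat.find_min hPex hs2)
          · rfl
      have hdm0 : w.dir (m - 1) = true := hall (m - 1) (by omega) (by omega)
      have hmanc : w.node m ∈ G.anc S := by
        by_contra hcon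
        apply hw
        refine ⟨m - 1, by omega, ?_⟩
        rw [show m - 1 + 1 = m by omega]
        exact Or.inl ⟨⟨hdm0, hdm⟩, hcon⟩
      obtain ⟨s, hsS, hr⟩ := hmanc
      exact hv ⟨s, hsS,
        Relation.ReflTransGen.trans (reach_chain w i m (by omega) (by omega) hall) hr⟩
    · -- non-collider at the junction
      rcases hdisj with ⟨he, hC⟩ | ⟨hd, hA⟩
      · apply hA2
        refine Or.inr ⟨?_, heq ▸ hvS, Or.inl ⟨he, heq ▸ hC⟩⟩
        rintro ⟨_, h2⟩; rw [he] at h2; exact Bool.noConfusion h2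
      · apply hA1
        refine Or.inr ⟨?_, hvS, Or.inr ⟨hd, hA⟩⟩
        rintro ⟨h1, _⟩; rw [hd] at h1; exact Bool.noConfusion h1
  · -- entirely in the second part
    have hne : ∀ m, i < m → (if m ≤ i then w.node m else w.node (m + D)) = w.node (m + D) := by
      intro m hm'; rw [if_neg (by omega)]
    rw [if_neg (by omega : ¬ (t < i)), if_neg (by omega : ¬ (t + 1 < i)),
      hne (t + 1) (by omega), hne (t + 2) (by omega),
      show t + 1 + D = t + D + 1 by omega, show t + 2 + D = t + D + 2 by omega] at hb
    have hnt : (if t ≤ i then w.node t else w.node (t + D)) = w.node (t + D) := by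
      by_cases h' : t ≤ i
      · have : t = i := by omega
        rw [if_pos h', this, heq]
      · rw [if_neg h']
    rw [hnt] at hb
    exact hw ⟨t + D, by omega, hb⟩

end R1Aux
section R1Aux2

variable {V : Type}

open DiGraph

lemma exists_path_of_injWalk {G : DiGraph V} {A B : V} (w : GWalk G A B) (S : Set V)
    (hinj : ∀ a b, a ≤ w.k + 1 → b ≤ w.k + 1 → w.node a = w.node b → a = b)
    (hw : ¬ w.Blocked S) : ∃ p : GPath G A B, ¬ p.sigmaBlocked S := by
  refine ⟨⟨w.k, fun m => w.node m.val, fun m => w.dir m.val, ?_, ?_, ?_, ?_⟩, ?_⟩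
  · intro a b hab
    exact Fin.ext (hinj a.val b.val (by omega) (by omega) hab)
  · show w.node ((0 : Fin (w.k + 2)).val) = A
    rw [Fin.val_zero]; exact w.first
  · show w.node ((Fin.last (w.k + 1)).val) = B
    rw [Fin.val_last]; exact w.last
  · intro i
    have h := w.adj i.val (by omega)
    exact ⟨h.1, h.2⟩
  · rintro ⟨jf, hj⟩
    exact hw ⟨jf.val, jf.isLt, hj⟩

lemma walk_to_path {G : DiGraph V} {A B : V} (S : Set V) (hAB : A ≠ B) :
    ∀ n (w : GWalk G A B), w.k ≤ n → ¬ w.Blocked S →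
      ∃ p : GPath G A B, ¬ p.sigmaBlocked S := by
  intro n
  induction n with
  | zero =>
    intro w hk hw
    refine exists_path_of_injWalk w S ?_ hw
    intro a b ha hb hab
    have ha1 : a ≤ 1 := by omega
    have hb1 : b ≤ 1 := by omega
    have key : ¬ w.node 0 = w.node 1 := by
      intro h
      apply hAB
      have e1 : w.node 1 = B := by
        rw [show (1 : ℕ) = w.k + 1 by omega]; exact w.last
      exact (w.first.symm.trans h).trans e1
    interval_cases a <;> interval_cases b <;>
      first | rfl | exact absurd hab key | exact absurd hab.symm key
  | succ n ih =>
    intro w hk hw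
    by_cases hinj : ∀ a b, a ≤ w.k + 1 → b ≤ w.k + 1 → w.node a = w.node b → a = b
    · exact exists_path_of_injWalk w S hinj hw
    · push_neg at hinj
      obtain ⟨a, b, ha, hb, hab, hne⟩ := hinj
      -- normalize to i < j
      obtain ⟨i, j, hij, hj, heq⟩ : ∃ i j, i < j ∧ j ≤ w.k + 1 ∧ w.node i = w.node j := by
        rcases Nat.lt_or_ge a b with h | h
        · exact ⟨a, b, h, hb, hab⟩
        · exact ⟨b, a, by omega, ha, hab.symm⟩
      have hne0 : ¬ (i = 0 ∧ j = w.k + 1) := by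
        rintro ⟨h0, h1⟩
        apply hAB
        have e0 : w.node i = A := by rw [h0]; exact w.first
        have e1 : w.node j = B := by rw [h1]; exact w.last
        exact (e0.symm.trans heq).trans e1
      have hDk : j - i ≤ w.k := by
        rcases Nat.lt_or_ge j (w.k + 1) with h | h
        · omega
        · have h1 : j = w.k + 1 := by omega
          have h0 : i ≠ 0 := fun h0 => hne0 ⟨h0, h1⟩
          omega
      have heq' : w.node i = w.node (i + (j - i)) := by
        rw [show i + (j - i) = j by omega]; exact heq
      have hw' := spliceWalk_not_blocked w i (j - i) (by omega) (by omega) hDk heq' S hw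
      exact ih (spliceWalk w i (j - i) (by omega) (by omega) hDk heq') (by
        show w.k - (j - i) ≤ n; omega) hw'

def concatWalk {G : DiGraph V} {A M B : V} (w1 : GWalk G A M) (w2 : GWalk G M B) :
    GWalk G A B where
  k := w1.k + w2.k + 1
  node m := if m ≤ w1.k then w1.node m else w2.node (m - (w1.k + 1))
  dir m := if m ≤ w1.k then w1.dir m else w2.dir (m - (w1.k + 1))
  first := by simp [w1.first]
  last := by
    beta_reduce
    rw [if_neg (by omega : ¬ (w1.k + w2.k + 1 + 1 ≤ w1.k)),
      show w1.k + w2.k + 1 + 1 - (w1.k + 1) = w2.k + 1 by omega, w2.last]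
  adj m hm := by
    beta_reduce
    by_cases h : m ≤ w1.k
    · rw [if_pos h, if_pos h]
      by_cases h2 : m + 1 ≤ w1.k
      · rw [if_pos h2]; exact w1.adj m h
      · have ha := w1.adj m h
        have e : w1.node (m + 1) = M := by
          rw [show m + 1 = w1.k + 1 by omega]; exact w1.last
        rw [e] at ha
        rw [if_neg h2, show m + 1 - (w1.k + 1) = 0 by omega, w2.first]
        exact ha
    · rw [if_neg h, if_neg h, if_neg (by omega : ¬ (m + 1 ≤ w1.k)),
        show m + 1 - (w1.k + 1) = m - (w1.k + 1) + 1 by omega]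
      exact w2.adj (m - (w1.k + 1)) (by omega)

lemma concatWalk_not_blocked {G : DiGraph V} {A M B : V} (w1 : GWalk G A M)
    (w2 : GWalk G M B) (S : Set V) (h1 : ¬ w1.Blocked S) (h2 : ¬ w2.Blocked S)
    (hj : ¬ blockAt G S (w1.dir w1.k) (w2.dir 0) (w1.node w1.k) M (w2.node 1)) :
    ¬ (concatWalk w1 w2).Blocked S := by
  rintro ⟨t, ht, hb⟩
  simp only [concatWalk] at ht hb
  rcases lt_trichotomy t w1.k with h | h | h
  · apply h1
    refine ⟨t, h, ?_⟩
    rw [if_pos (by omega : t ≤ w1.k), if_pos (by omega : t + 1 ≤ w1.k),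
      if_pos (by omega : t ≤ w1.k), if_pos (by omega : t + 1 ≤ w1.k)] at hb
    by_cases h3 : t + 2 ≤ w1.k
    · rwa [if_pos h3] at hb
    · rw [if_neg h3, show t + 2 - (w1.k + 1) = 0 by omega, w2.first] at hb
      have e : w1.node (t + 2) = M := by
        rw [show t + 2 = w1.k + 1 by omega]; exact w1.last
      rw [e]
      exact hb
  · apply hj
    rw [if_pos (by omega : t ≤ w1.k), if_neg (by omega : ¬ (t + 1 ≤ w1.k)),
      if_pos (by omega : t ≤ w1.k), if_neg (by omega : ¬ (t + 1 ≤ w1.k)),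
      if_neg (by omega : ¬ (t + 2 ≤ w1.k)), show t + 1 - (w1.k + 1) = 0 by omega,
      show t + 2 - (w1.k + 1) = 1 by omega, w2.first, h] at hb
    exact hb
  · apply h2
    refine ⟨t - (w1.k + 1), by omega, ?_⟩
    rw [if_neg (by omega : ¬ (t ≤ w1.k)), if_neg (by omega : ¬ (t + 1 ≤ w1.k)),
      if_neg (by omega : ¬ (t ≤ w1.k)), if_neg (by omega : ¬ (t + 1 ≤ w1.k)),
      if_neg (by omega : ¬ (t + 2 ≤ w1.k)),
      show t + 1 - (w1.k + 1) = t - (w1.k + 1) + 1 by omega,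
      show t + 2 - (w1.k + 1) = t - (w1.k + 1) + 2 by omega] at hb
    exact hb

/-- The prefix walk of a path, up to position `c`. -/
def prefixWalk {G : DiGraph V} {A B : V} (p : GPath G A B) (c : ℕ)
    (h1 : 1 ≤ c) (h2 : c ≤ p.k + 1) (M : V) (hM : p.node ⟨c, by omega⟩ = M) :
    GWalk G A M where
  k := c - 1
  node m := p.node ⟨min m c, by omega⟩
  dir m := p.dir ⟨min m (c - 1), by omega⟩
  first := by
    beta_reduce
    rw [show (⟨min 0 c, by omega⟩ : Fin (p.k + 2)) = 0 from Fin.ext (by simp)]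
    exact p.first
  last := by
    beta_reduce
    rw [show (⟨min (c - 1 + 1) c, by omega⟩ : Fin (p.k + 2)) = ⟨c, by omega⟩ from
      Fin.ext (by simp; omega)]
    exact hM
  adj m hm := by
    beta_reduce
    have e1 : (⟨min m (c - 1), by omega⟩ : Fin (p.k + 1)) = (⟨m, by omega⟩ : Fin (p.k + 1)) :=
      Fin.ext (by simp; omega)
    have e2 : (⟨min m c, by omega⟩ : Fin (p.k + 2)) = (⟨m, by omega⟩ : Fin (p.k + 1)).castSucc :=
      Fin.ext (by simp [Fin.coe_castSucc]; omega)
    have e3 : (⟨min (m + 1) c, by omega⟩ : Fin (p.k + 2)) =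
        (⟨m, by omega⟩ : Fin (p.k + 1)).succ :=
      Fin.ext (by simp [Fin.val_succ]; omega)
    rw [e1, e2, e3]
    exact p.adj _

lemma prefixWalk_not_blocked {G : DiGraph V} {A B : V} (p : GPath G A B) (c : ℕ)
    (h1 : 1 ≤ c) (h2 : c ≤ p.k + 1) (M : V) (hM : p.node ⟨c, by omega⟩ = M) (S : Set V)
    (hopen : ¬ p.sigmaBlocked S) : ¬ (prefixWalk p c h1 h2 M hM).Blocked S := by
  rintro ⟨t, ht, hb⟩
  simp only [prefixWalk] at ht hb
  apply hopen
  have htk : t < p.k := by omega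
  refine ⟨⟨t, htk⟩, ?_⟩
  rw [show (⟨min t (c - 1), by omega⟩ : Fin (p.k + 1)) = (⟨t, htk⟩ : Fin p.k).castSucc from
      Fin.ext (by simp [Fin.coe_castSucc]; omega),
    show (⟨min (t + 1) (c - 1), by omega⟩ : Fin (p.k + 1)) = (⟨t, htk⟩ : Fin p.k).succ from
      Fin.ext (by simp [Fin.val_succ]; omega),
    show (⟨min t c, by omega⟩ : Fin (p.k + 2)) = (⟨t, htk⟩ : Fin p.k).castSucc.castSucc from
      Fin.ext (by simp [Fin.coe_castSucc]; omega),
    show (⟨min (t + 1) c, by omega⟩ : Fin (p.k + 2)) = (⟨t, htk⟩ : Fin p.k).succ.castSucc from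
      Fin.ext (by simp [Fin.coe_castSucc, Fin.val_succ]; omega),
    show (⟨min (t + 2) c, by omega⟩ : Fin (p.k + 2)) = (⟨t, htk⟩ : Fin p.k).succ.succ from
      Fin.ext (by simp [Fin.val_succ]; omega)] at hb
  exact hb

end R1Aux2

/-- Soundness of rule R1 in possibly cyclic graphs. -/
theorem R1_sound {V : Type} [Fintype V]
    (G : DiGraph V) (Obs Lat : Set V)
    (hpart : Obs ∪ Lat = Set.univ) (hdisj : Obs ∩ Lat = ∅)
    (X Y : V) (hX : X ∈ Obs) (hY : Y ∈ Obs) (hXY : X ≠ Y)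
    (hpre : PreTreatment G X Y)
    (MBX MBY : Set V)
    (hMBX : G.IsSigmaMB Obs X MBX) (hMBY : G.IsSigmaMB Obs Y MBY)
    (W : V) (hW : W ∈ MBX \ {Y}) (Z : Set V) (hZ : Z ⊆ MBY \ {X, W})
    (hdep : ¬ G.sigmaSep W Y Z) (hindep : G.sigmaSep W Y (Z ∪ {X})) :
    G.Edge X Y ∧ G.IsBackdoorAdjustment X Y Z := by
  classical
  obtain ⟨hdeY, hchX⟩ := hpre
  obtain ⟨p, hopen⟩ := not_forall.mp hdep
  obtain ⟨j, hj⟩ := hindep p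
  have hYnZ : Y ∉ Z := fun h => (hMBY.1 (hZ h).1).2 rfl
  have hXnZ : X ∉ Z := fun h => (hZ h).2 (Or.inl rfl)
  have hWY : W ≠ Y := hW.2
  rcases hj with ⟨hc, hanc⟩ | ⟨hnc, hmem, hdisj'⟩
  · exfalso
    apply hanc
    have hin : p.inner j ∈ G.anc Z := by
      by_contra h
      exact hopen ⟨j, Or.inl ⟨hc, h⟩⟩
    exact anc_mono Set.subset_union_left hin
  · have hinX : p.inner j = X := by
      rcases hmem with h | h
      · exact absurd ⟨j, Or.inr ⟨hnc, h, hdisj'⟩⟩ hopen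
      · exact h
    have hjlt := j.isLt
    have hnotleft : ¬ p.dir j.castSucc = false := by
      intro hd
      have hE : G.Edge (p.node j.castSucc.succ) (p.node j.castSucc.castSucc) :=
        (p.adj j.castSucc).2 hd
      have hsc : p.node j.castSucc.succ = X := by
        rw [show j.castSucc.succ = j.succ.castSucc from
          Fin.ext (by simp [Fin.val_succ, Fin.coe_castSucc])]
        exact hinX
      rw [hsc] at hE
      have hYeq : p.node j.castSucc.castSucc = Y := hchX hE
      have heqf := p.inj (hYeq.trans p.last.symm)
      have hv := congrArg Fin.val heqf
      simp only [Fin.coe_castSucc, Fin.val_last] at hv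
      omega
    have hd1 : p.dir j.castSucc = true := by
      cases h : p.dir j.castSucc
      · exact absurd h hnotleft
      · rfl
    obtain ⟨he1, hscX⟩ : p.dir j.succ = true ∧ p.node j.succ.succ ∉ G.scc (p.inner j) := by
      rcases hdisj' with h | ⟨hd, _⟩
      · exact h
      · exact absurd hd hnotleft
    have hE : G.Edge X (p.node j.succ.succ) := by
      have h := (p.adj j.succ).1 he1
      have hX0 : p.node j.succ.castSucc = X := hinX
      rwa [hX0] at h
    have hCY : p.node j.succ.succ = Y := hchX hE
    have hEXY : G.Edge X Y := by rw [← hCY]; exact hE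
    have hlastj := p.inj (hCY.trans p.last.symm)
    have hjval : j.val + 2 = p.k + 1 := by
      have hv := congrArg Fin.val hlastj
      simpa [Fin.val_last, Fin.val_succ] using hv
    refine ⟨hEXY, hXnZ, hYnZ, ?_, ?_⟩
    · -- Z ∩ de X = ∅
      apply Set.eq_empty_iff_forall_notMem.mpr
      rintro v ⟨hvZ, hvd⟩
      obtain ⟨hvne, htg⟩ := hvd
      obtain ⟨c, hXc, hcv⟩ := Relation.TransGen.head'_iff.mp htg
      have hcY : c = Y := hchX hXc
      rw [hcY] at hcv
      rcases Relation.reflTransGen_iff_eq_or_transGen.mp hcv with h | h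
      · exact hYnZ (h ▸ hvZ)
      · have hvY : v ≠ Y := fun hv => hYnZ (hv ▸ hvZ)
        have : v ∈ G.de Y := ⟨hvY, h⟩
        rw [hdeY] at this
        exact this
    · -- backdoor blocking
      intro q hq0
      by_contra hqopen
      have hK1 : 1 ≤ p.k := by omega
      have hKle : p.k ≤ p.k + 1 := by omega
      have hXK : p.node ⟨p.k, by omega⟩ = X := by
        have h1 : p.node ⟨p.k, by omega⟩ = p.node j.succ.castSucc :=
          fin_congr p.node (by simp [Fin.coe_castSucc, Fin.val_succ]; omega)
        exact h1.trans hinX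
      have hw1open : ¬ (prefixWalk p p.k hK1 hKle X hXK).Blocked Z :=
        prefixWalk_not_blocked p p.k hK1 hKle X hXK Z hopen
      have hw1open' : ¬ (prefixWalk p p.k hK1 hKle X hXK).Blocked (Z ∪ {X}) := by
        apply GWalk.not_blocked_insert _ Z X ?_ hw1open
        intro t ht1 ht2 htX
        have hXn : p.node ⟨min t p.k, by omega⟩ = p.node ⟨p.k, by omega⟩ := by
          have h0 : (prefixWalk p p.k hK1 hKle X hXK).node t =
              p.node ⟨min t p.k, by omega⟩ := rfl
          exact (h0.symm.trans htX).trans hXK.symm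
        have heqf := p.inj hXn
        have hv := congrArg Fin.val heqf
        simp only at hv
        have hwk : (prefixWalk p p.k hK1 hKle X hXK).k = p.k - 1 := rfl
        rw [hwk] at ht2
        omega
      have hq1 : 1 ≤ q.k + 1 := by omega
      have hq2 : q.k + 1 ≤ q.k + 1 := le_refl _
      have hqY : q.node ⟨q.k + 1, by omega⟩ = Y := by
        have h1 : q.node ⟨q.k + 1, by omega⟩ = q.node (Fin.last (q.k + 1)) :=
          fin_congr q.node (by simp [Fin.val_last])
        exact h1.trans q.last
      have hw2open : ¬ (prefixWalk q (q.k + 1) hq1 hq2 Y hqY).Blocked Z :=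
        prefixWalk_not_blocked q (q.k + 1) hq1 hq2 Y hqY Z hqopen
      have hw2open' : ¬ (prefixWalk q (q.k + 1) hq1 hq2 Y hqY).Blocked (Z ∪ {X}) := by
        apply GWalk.not_blocked_insert _ Z X ?_ hw2open
        intro t ht1 ht2 htX
        have hXn : q.node ⟨min t (q.k + 1), by omega⟩ = q.node 0 := by
          have h0 : (prefixWalk q (q.k + 1) hq1 hq2 Y hqY).node t =
              q.node ⟨min t (q.k + 1), by omega⟩ := rfl
          exact (h0.symm.trans htX).trans q.first.symm
        have heqf := q.inj hXn
        have hv := congrArg Fin.val heqf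
        simp only [Fin.val_zero] at hv
        have hwk : (prefixWalk q (q.k + 1) hq1 hq2 Y hqY).k = q.k + 1 - 1 := rfl
        rw [hwk] at ht2
        omega
      have hjunc : ¬ blockAt G (Z ∪ {X})
          ((prefixWalk p p.k hK1 hKle X hXK).dir (prefixWalk p p.k hK1 hKle X hXK).k)
          ((prefixWalk q (q.k + 1) hq1 hq2 Y hqY).dir 0)
          ((prefixWalk p p.k hK1 hKle X hXK).node (prefixWalk p p.k hK1 hKle X hXK).k)
          X ((prefixWalk q (q.k + 1) hq1 hq2 Y hqY).node 1) := by
        have hd : (prefixWalk p p.k hK1 hKle X hXK).dir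
            (prefixWalk p p.k hK1 hKle X hXK).k = true := by
          have h0 : (prefixWalk p p.k hK1 hKle X hXK).dir (p.k - 1) =
              p.dir ⟨min (p.k - 1) (p.k - 1), by omega⟩ := rfl
          have h1 : p.dir ⟨min (p.k - 1) (p.k - 1), by omega⟩ = p.dir j.castSucc :=
            fin_congr p.dir (by simp [Fin.coe_castSucc]; omega)
          exact h1.trans hd1
        have he : (prefixWalk q (q.k + 1) hq1 hq2 Y hqY).dir 0 = false := by
          have h0 : (prefixWalk q (q.k + 1) hq1 hq2 Y hqY).dir 0 =
              q.dir ⟨min 0 (q.k + 1 - 1), by omega⟩ := rfl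
          have h1 : q.dir ⟨min 0 (q.k + 1 - 1), by omega⟩ = q.dir 0 :=
            fin_congr q.dir (by simp)
          exact h1.trans hq0
        rw [hd, he]
        rintro (⟨_, hxa⟩ | ⟨hh, _⟩)
        · exact hxa ⟨X, Set.mem_union_right _ rfl, Relation.ReflTransGen.refl⟩
        · exact hh ⟨rfl, rfl⟩
      have hcw := concatWalk_not_blocked _ _ (Z ∪ {X}) hw1open' hw2open' hjunc
      obtain ⟨p'', hp''⟩ := walk_to_path (Z ∪ {X}) hWY
        (concatWalk (prefixWalk p p.k hK1 hKle X hXK)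
          (prefixWalk q (q.k + 1) hq1 hq2 Y hqY)).k
        (concatWalk (prefixWalk p p.k hK1 hKle X hXK)
          (prefixWalk q (q.k + 1) hq1 hq2 Y hqY)) (le_refl _) hcw
      exact hp'' (hindep p'')
end

section
/- Soundness of rule R2 in possibly cyclic graphs: let G=(V,E) be a directed graph, possibly cyclic, whose node set is partitioned as V = O ∪ L into observed and latent nodes, with distinct observed nodes X,Y ∈ O satisfying the pre-treatment assumption (De(Y)=∅ and Ch(X) ⊆ {Y}). Suppose that either (1) there exists Z ⊆ MB_σ^G(Y)\{X} such that X is σ-separated from Y given Z in G, or (2) there exist W ∈ MB_σ^G(X)\{Y} and Z ⊆ MB_σ^G(Y)\{X,W} such that W is not σ-separated from X given Z in G and W is σ-separated from Y given Z in G. Then the edge X→Y does not belong to E. -/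
namespace GPath

variable {V : Type} {G : DiGraph V} {W X Y : V}

def SigmaBlocksAt (p : GPath G X Y) (S : Set V) (j : Fin p.k) : Prop :=
  (p.isCollider j ∧ p.inner j ∉ G.anc S) ∨
  (¬ p.isCollider j ∧ p.inner j ∈ S ∧
    ((p.dir j.succ = true ∧ p.node j.succ.succ ∉ G.scc (p.inner j)) ∨
     (p.dir j.castSucc = false ∧ p.node j.castSucc.castSucc ∉ G.scc (p.inner j))))

theorem sigmaBlocked_iff_exists_sigmaBlocksAt (p : GPath G X Y) (S : Set V) :
    p.sigmaBlocked S ↔ ∃ j, p.SigmaBlocksAt S j :=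
  Iff.rfl

structure IsPrefix (p : GPath G W X) (q : GPath G W Y) : Prop where
  le : p.k ≤ q.k
  node_eq : ∀ i, p.node i = q.node (Fin.castLE (by omega) i)
  dir_eq : ∀ i, p.dir i = q.dir (Fin.castLE (by omega) i)

theorem IsPrefix.sigmaBlocksAt_iff {p : GPath G W X} {q : GPath G W Y} (hpq : p.IsPrefix q)
    (S : Set V) (j : Fin p.k) :
    p.SigmaBlocksAt S j ↔ q.SigmaBlocksAt S (Fin.castLE hpq.le j) := by
  have hn : ∀ (a : Fin (p.k + 2)) (b : Fin (q.k + 2)), (a : ℕ) = b → p.node a = q.node b :=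
    fun a b h => (hpq.node_eq a).trans (congrArg q.node (Fin.ext h))
  have hd : ∀ (a : Fin (p.k + 1)) (b : Fin (q.k + 1)), (a : ℕ) = b → p.dir a = q.dir b :=
    fun a b h => (hpq.dir_eq a).trans (congrArg q.dir (Fin.ext h))
  unfold SigmaBlocksAt isCollider inner
  rw [hn j.succ.castSucc (Fin.castLE hpq.le j).succ.castSucc rfl,
    hn j.succ.succ (Fin.castLE hpq.le j).succ.succ rfl,
    hn j.castSucc.castSucc (Fin.castLE hpq.le j).castSucc.castSucc rfl,
    hd j.castSucc (Fin.castLE hpq.le j).castSucc rfl, hd j.succ (Fin.castLE hpq.le j).succ rfl]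

theorem IsPrefix.sigmaBlocked {p : GPath G W X} {q : GPath G W Y} (hpq : p.IsPrefix q)
    {S : Set V} (hp : p.sigmaBlocked S) : q.sigmaBlocked S := by
  rw [sigmaBlocked_iff_exists_sigmaBlocksAt] at hp ⊢
  obtain ⟨j, hj⟩ := hp
  exact ⟨_, (hpq.sigmaBlocksAt_iff S j).1 hj⟩

def ofEdge (e : G.Edge X Y) : GPath G X Y where
  k := 0
  node := ![X, Y]
  dir := fun _ => true
  inj := by
    have hXY : X ≠ Y := fun h => G.loopless X (h ▸ e)
    intro i j
    fin_cases i <;> fin_cases j <;> simp [hXY, hXY.symm]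
  first := rfl
  last := rfl
  adj := fun i => by fin_cases i; simpa using e

def take (p : GPath G W X) (m : Fin (p.k + 1)) : GPath G W (p.node m.succ) where
  k := m
  node := p.node ∘ Fin.castLE (by omega)
  dir := p.dir ∘ Fin.castLE (by omega)
  inj := p.inj.comp (Fin.castLE_injective _)
  first := p.first
  last := rfl
  adj := fun i => p.adj (Fin.castLE (by omega) i)

theorem isPrefix_take (p : GPath G W X) (m : Fin (p.k + 1)) : (p.take m).IsPrefix p :=
  ⟨Nat.le_of_lt_succ m.isLt, fun _ => rfl, fun _ => rfl⟩

def snoc (p : GPath G W X) (e : G.Edge X Y) (hY : Y ∉ Set.range p.node) : GPath G W Y where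
  k := p.k + 1
  node := Fin.snoc p.node Y
  dir := Fin.snoc p.dir true
  inj := Fin.snoc_injective_of_injective p.inj hY
  first := by simpa using p.first
  last := Fin.snoc_last ..
  adj := by
    intro i
    induction i using Fin.lastCases with
    | last => simpa [← p.last] using e
    | cast i => simpa only [Fin.succ_castSucc, Fin.snoc_castSucc] using p.adj i

theorem isPrefix_snoc (p : GPath G W X) (e : G.Edge X Y) (hY : Y ∉ Set.range p.node) :
    p.IsPrefix (p.snoc e hY) :=
  ⟨Nat.le_succ _, fun _ => (Fin.snoc_castSucc (α := fun _ => V) ..).symm,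
    fun _ => (Fin.snoc_castSucc (α := fun _ => Bool) ..).symm⟩

theorem sigmaBlocked_of_snoc {p : GPath G W X} {e : G.Edge X Y} {hY : Y ∉ Set.range p.node}
    {S : Set V} (hX : X ∉ S) (h : (p.snoc e hY).sigmaBlocked S) : p.sigmaBlocked S := by
  rw [sigmaBlocked_iff_exists_sigmaBlocksAt] at h ⊢
  obtain ⟨j, hj⟩ := h
  change Fin (p.k + 1) at j
  induction j using Fin.lastCases with
  | cast j => exact ⟨j, ((p.isPrefix_snoc e hY).sigmaBlocksAt_iff S j).2 hj⟩
  | last =>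
    have hinner : (p.snoc e hY).inner (Fin.last p.k) = X := by
      simp [inner, snoc, ← p.last]
    have hdir : (p.snoc e hY).dir (Fin.last p.k).succ = true := by
      simp [snoc]
    rcases hj with ⟨⟨-, hcol⟩, -⟩ | ⟨-, hmem, -⟩
    · exact absurd (hcol.symm.trans hdir) Bool.false_ne_true
    · exact absurd (hinner ▸ hmem) hX

end GPath

namespace DiGraph

variable {V : Type} {G : DiGraph V} {W X Y : V} {S : Set V}

theorem not_sigmaSep_of_edge (e : G.Edge X Y) : ¬ G.sigmaSep X Y S :=
  fun h => (h (GPath.ofEdge e)).elim fun j _ => j.elim0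

theorem sigmaSep_of_edge_of_sigmaSep (hWY : W ≠ Y) (hX : X ∉ S) (e : G.Edge X Y)
    (h : G.sigmaSep W Y S) : G.sigmaSep W X S := by
  intro p
  by_cases hY : Y ∈ Set.range p.node
  · obtain ⟨i, rfl⟩ := hY
    obtain ⟨m, rfl⟩ := Fin.exists_succ_eq.2 fun h0 : i = 0 => hWY (by rw [h0, p.first])
    exact (p.isPrefix_take m).sigmaBlocked (h _)
  · exact GPath.sigmaBlocked_of_snoc hX (h (p.snoc e hY))

end DiGraph

theorem R2_sound_general {V : Type}
    (G : DiGraph V)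
    (X Y : V)
    (MBX MBY : Set V)
    (hR2 : (∃ Z ⊆ MBY \ {X}, G.sigmaSep X Y Z) ∨
      (∃ W ∈ MBX \ {Y}, ∃ Z ⊆ MBY \ {X, W},
        ¬ G.sigmaSep W X Z ∧ G.sigmaSep W Y Z)) :
    ¬ G.Edge X Y := by
  intro e
  rcases hR2 with ⟨Z, -, hsep⟩ | ⟨W, hW, Z, hZ, hWX, hWY⟩
  · exact DiGraph.not_sigmaSep_of_edge e hsep
  · have hXZ : X ∉ Z := fun hx => (hZ hx).2 (by simp)
    have hWneY : W ≠ Y := fun h => hW.2 h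
    exact hWX (DiGraph.sigmaSep_of_edge_of_sigmaSep hWneY hXZ e hWY)

/-- Soundness of rule R2 in possibly cyclic graphs. -/
theorem R2_sound {V : Type} [Fintype V]
    (G : DiGraph V) (Obs Lat : Set V)
    (hpart : Obs ∪ Lat = Set.univ) (hdisj : Obs ∩ Lat = ∅)
    (X Y : V) (hX : X ∈ Obs) (hY : Y ∈ Obs) (hXY : X ≠ Y)
    (hpre : PreTreatment G X Y)
    (MBX MBY : Set V)
    (hMBX : G.IsSigmaMB Obs X MBX) (hMBY : G.IsSigmaMB Obs Y MBY)
    (hR2 : (∃ Z ⊆ MBY \ {X}, G.sigmaSep X Y Z) ∨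
      (∃ W ∈ MBX \ {Y}, ∃ Z ⊆ MBY \ {X, W},
        ¬ G.sigmaSep W X Z ∧ G.sigmaSep W Y Z)) :
    ¬ G.Edge X Y :=
  R2_sound_general G X Y MBX MBY hR2
end
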